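/- arXiv:1009.2463 — 5 statements merged into one kernel-verified Lean document; each statement's English description precedes it below -/
import Mathlib

section
/- Let f be a probability density function on [0,∞) that is positive on [0,∞), absolutely continuous, and such that f′ is bounded on every compact subinterval of [0,∞). Let F̄(t) = ∫ₜ^∞ f(x) dx be the survival function, r(t) = f(t)/F̄(t) the hazard rate, and m the renewal density, i.e., the solution of m(t) = f(t) + ∫₀ᵗ m(x) f(t−x) dx for t ≥ 0. Then m is absolutely continuous and for all t > 0: m′(t) = r′(t) F̄(t) + ∫₀ᵗ m′(x) [r(t−x) − r(t)] F̄(t−x) dx. -/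
open MeasureTheory Set

/-!
Differentiating the renewal equation under the integral sign suggests `m' = f' + f(0) m + m ⋆ f'`,
where `(a ⋆ b)(t) = ∫₀ᵗ a(x) b(t - x) dx`. Fubini's theorem, in the form `∫₀ᵗ a ⋆ b = a ⋆ B` with
`B` the primitive of `b`, together with the commutativity of `⋆`, turns the renewal equation into
`∫₀ᵗ m' = m(t) - m(0)`, `m' ⋆ f = m' - f' - f(0) f` and `m' ⋆ F̄ = f - f(0) F̄`. Since
`r(t - x) F̄(t - x) = f(t - x)`, the right-hand side of the key identity is
`r' F̄ + m' ⋆ f - r · (m' ⋆ F̄)`, which these identities reduce to `m'`.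
-/

/-- The survival function `F̄ t = ∫_t^∞ f x dx` of a density `f` on `[0, ∞)`. -/
noncomputable def survival (f : ℝ → ℝ) (t : ℝ) : ℝ := ∫ x in Set.Ioi t, f x

/-- The hazard rate `r t = f t / F̄ t`. -/
noncomputable def hazardRate (f : ℝ → ℝ) (t : ℝ) : ℝ := f t / survival f t

/-- A version of the derivative of the hazard rate, expressed through the a.e. derivative
`f'` of `f` (using `F̄' = -f`): `r' = (f' F̄ + f²) / F̄²`. -/
noncomputable def hazardRate' (f f' : ℝ → ℝ) (t : ℝ) : ℝ :=
  (f' t * survival f t + (f t) ^ 2) / (survival f t) ^ 2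

theorem IntervalIntegrable.mul_comp_sub {a b : ℝ → ℝ} {t C : ℝ} (ht : 0 ≤ t)
    (ha : IntervalIntegrable a volume 0 t) (hb : IntervalIntegrable b volume 0 t)
    (hbC : ∀ y ∈ Icc 0 t, ‖b y‖ ≤ C) :
    IntervalIntegrable (fun x => a x * b (t - x)) volume 0 t := by
  have hb' : IntervalIntegrable (fun x => b (t - x)) volume 0 t := by
    simpa using (hb.comp_sub_left t).symm
  rw [intervalIntegrable_iff] at ha hb' ⊢
  refine ha.mul_bdd (c := C) hb'.aestronglyMeasurable
    (ae_restrict_of_forall_mem measurableSet_uIoc fun x hx => ?_)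
  rw [uIoc_of_le ht] at hx
  exact hbC _ ⟨by linarith [hx.2], by linarith [hx.1]⟩

theorem IntervalIntegrable.mul_comp_sub_of_continuousOn {a b : ℝ → ℝ} {t : ℝ} (ht : 0 ≤ t)
    (ha : IntervalIntegrable a volume 0 t) (hb : ContinuousOn b (Icc 0 t)) :
    IntervalIntegrable (fun x => a x * b (t - x)) volume 0 t :=
  have ⟨_, hC⟩ := isCompact_Icc.exists_bound_of_continuousOn hb
  IntervalIntegrable.mul_comp_sub ht ha (hb.intervalIntegrable_of_Icc ht) hC

theorem MeasureTheory.LocallyIntegrableOn.intervalIntegrable_of_Ici {g : ℝ → ℝ} {a t : ℝ}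
    (hg : LocallyIntegrableOn g (Ici a)) (ht : a ≤ t) : IntervalIntegrable g volume a t :=
  (intervalIntegrable_iff_integrableOn_Icc_of_le ht).2
    (hg.integrableOn_compact_subset Icc_subset_Ici_self isCompact_Icc)

/-- The convolution `a ⋆ b` of functions on `[0, ∞)`. -/
noncomputable def laplaceConv (a b : ℝ → ℝ) (t : ℝ) : ℝ := ∫ x in (0 : ℝ)..t, a x * b (t - x)

namespace laplaceConv

variable {a b : ℝ → ℝ} {t : ℝ}

theorem comm (a b : ℝ → ℝ) (t : ℝ) : laplaceConv a b t = laplaceConv b a t := by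
  simpa [laplaceConv, mul_comm] using
    intervalIntegral.integral_comp_sub_left (fun x => b x * a (t - x)) (a := 0) (b := t) t

theorem congr_right {b' : ℝ → ℝ} (ht : 0 ≤ t) (h : EqOn b b' (Icc 0 t)) :
    laplaceConv a b t = laplaceConv a b' t := by
  refine intervalIntegral.integral_congr fun x hx => ?_
  rw [uIcc_of_le ht] at hx
  rw [h ⟨by linarith [hx.2], by linarith [hx.1]⟩]

theorem eq_integral_indicator_mul {s : ℝ} (hs : s ∈ Icc 0 t) :
    laplaceConv a b s = ∫ x, (Ioc 0 t).indicator a x * (Ioc 0 t).indicator b (s - x) := by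
  rw [laplaceConv, intervalIntegral.integral_of_le hs.1, integral_Ioc_eq_integral_Ioo,
    ← integral_indicator measurableSet_Ioo]
  congr 1 with x
  simp only [indicator_apply, mem_Ioo, mem_Ioc]
  split_ifs <;> grind

theorem integrable_indicator_mul (ha : IntegrableOn a (Ioc 0 t))
    (hb : IntegrableOn b (Ioc 0 t)) :
    Integrable (fun p : ℝ × ℝ => (Ioc 0 t).indicator a p.2 * (Ioc 0 t).indicator b (p.1 - p.2))
      (volume.prod volume) := by
  have hA := (integrable_indicator_iff measurableSet_Ioc).2 ha
  have hB := (integrable_indicator_iff measurableSet_Ioc).2 hb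
  simpa using hA.convolution_integrand (ContinuousLinearMap.mul ℝ ℝ) hB

theorem integral_indicator_comp_sub {x : ℝ} (hx : x ∈ Ioc 0 t) :
    ∫ s in Ioc 0 t, (Ioc 0 t).indicator b (s - x) = ∫ y in (0 : ℝ)..(t - x), b y := by
  have hset : Ioc (-x) (t - x) ∩ Ioc 0 t = Ioc 0 (t - x) := by
    ext y; simp only [mem_inter_iff, mem_Ioc]; grind
  rw [← intervalIntegral.integral_of_le (hx.1.le.trans hx.2),
    intervalIntegral.integral_comp_sub_right, zero_sub,
    intervalIntegral.integral_of_le (by linarith [hx.1, hx.2]),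
    ← integral_indicator measurableSet_Ioc, indicator_indicator, hset,
    integral_indicator measurableSet_Ioc, intervalIntegral.integral_of_le (by linarith [hx.2])]

theorem intervalIntegrable (ht : 0 ≤ t) (ha : IntervalIntegrable a volume 0 t)
    (hb : IntervalIntegrable b volume 0 t) : IntervalIntegrable (laplaceConv a b) volume 0 t := by
  rw [intervalIntegrable_iff_integrableOn_Ioc_of_le ht] at ha hb ⊢
  refine ((integrable_indicator_mul ha hb).integral_prod_left.integrableOn).congr_fun
    (fun s hs => ?_) measurableSet_Ioc
  exact (eq_integral_indicator_mul (Ioc_subset_Icc_self hs)).symm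

theorem integral_eq_laplaceConv_primitive (ht : 0 ≤ t) (ha : IntervalIntegrable a volume 0 t)
    (hb : IntervalIntegrable b volume 0 t) :
    ∫ s in (0 : ℝ)..t, laplaceConv a b s = laplaceConv a (fun y => ∫ z in (0 : ℝ)..y, b z) t := by
  rw [intervalIntegrable_iff_integrableOn_Ioc_of_le ht] at ha hb
  have hK : Integrable
      (fun p : ℝ × ℝ => (Ioc 0 t).indicator a p.2 * (Ioc 0 t).indicator b (p.1 - p.2))
      ((volume.restrict (Ioc 0 t)).prod volume) := by
    rw [Measure.restrict_prod_eq_prod_univ]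
    exact (integrable_indicator_mul ha hb).restrict
  calc ∫ s in (0 : ℝ)..t, laplaceConv a b s
      = ∫ s in Ioc 0 t, ∫ x, (Ioc 0 t).indicator a x * (Ioc 0 t).indicator b (s - x) := by
        rw [intervalIntegral.integral_of_le ht]
        exact setIntegral_congr_fun measurableSet_Ioc fun s hs =>
          eq_integral_indicator_mul (Ioc_subset_Icc_self hs)
    _ = ∫ x, (Ioc 0 t).indicator a x * ∫ s in Ioc 0 t, (Ioc 0 t).indicator b (s - x) := by
        rw [integral_integral_swap
          (f := fun s x => (Ioc 0 t).indicator a x * (Ioc 0 t).indicator b (s - x)) hK]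
        simp only [integral_const_mul]
    _ = ∫ x in Ioc 0 t, a x * ∫ y in (0 : ℝ)..(t - x), b y := by
        rw [← integral_indicator measurableSet_Ioc]
        congr 1 with x
        by_cases hx : x ∈ Ioc 0 t
        · rw [indicator_of_mem hx, indicator_of_mem hx, integral_indicator_comp_sub hx]
        · rw [indicator_of_notMem hx, indicator_of_notMem hx, zero_mul]
    _ = laplaceConv a (fun y => ∫ z in (0 : ℝ)..y, b z) t :=
        (intervalIntegral.integral_of_le ht).symm

theorem primitive_comm (ht : 0 ≤ t) (ha : IntervalIntegrable a volume 0 t)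
    (hb : IntervalIntegrable b volume 0 t) :
    laplaceConv a (fun y => ∫ z in (0 : ℝ)..y, b z) t =
      laplaceConv b (fun y => ∫ z in (0 : ℝ)..y, a z) t := by
  rw [← integral_eq_laplaceConv_primitive ht ha hb, ← integral_eq_laplaceConv_primitive ht hb ha]
  simp only [comm a b]

theorem sub_const (hab : IntervalIntegrable (fun x => a x * b (t - x)) volume 0 t)
    (ha : IntervalIntegrable a volume 0 t) (c : ℝ) :
    laplaceConv a (fun y => b y - c) t = laplaceConv a b t - c * ∫ x in (0 : ℝ)..t, a x := by
  simp only [laplaceConv, mul_sub]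
  rw [intervalIntegral.integral_sub hab (ha.mul_const c), intervalIntegral.integral_mul_const,
    mul_comm]

theorem const_add (hab : IntervalIntegrable (fun x => a x * b (t - x)) volume 0 t)
    (ha : IntervalIntegrable a volume 0 t) (c : ℝ) :
    laplaceConv a (fun y => c + b y) t = c * (∫ x in (0 : ℝ)..t, a x) + laplaceConv a b t := by
  simp only [laplaceConv, mul_add]
  rw [intervalIntegral.integral_add (ha.mul_const c) hab, intervalIntegral.integral_mul_const,
    mul_comm]

theorem const_sub (hab : IntervalIntegrable (fun x => a x * b (t - x)) volume 0 t)
    (ha : IntervalIntegrable a volume 0 t) (c : ℝ) :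
    laplaceConv a (fun y => c - b y) t = c * (∫ x in (0 : ℝ)..t, a x) - laplaceConv a b t := by
  simp only [laplaceConv, mul_sub]
  rw [intervalIntegral.integral_sub (ha.mul_const c) hab, intervalIntegral.integral_mul_const,
    mul_comm]

theorem sub_const_left (hab : IntervalIntegrable (fun x => a x * b (t - x)) volume 0 t)
    (hb : IntervalIntegrable b volume 0 t) (c : ℝ) :
    laplaceConv (fun y => a y - c) b t = laplaceConv a b t - c * ∫ x in (0 : ℝ)..t, b x := by
  have hb' : IntervalIntegrable (fun x => b (t - x)) volume 0 t := by
    simpa using (hb.comp_sub_left t).symm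
  simp only [laplaceConv, sub_mul]
  rw [intervalIntegral.integral_sub hab (hb'.const_mul c), intervalIntegral.integral_const_mul,
    intervalIntegral.integral_comp_sub_left, sub_self, sub_zero]

end laplaceConv

section Survival

variable {f : ℝ → ℝ}

theorem survival_eq_sub_integral (hf : IntegrableOn f (Ici 0)) {s : ℝ} (hs : 0 ≤ s) :
    survival f s = survival f 0 - ∫ y in (0 : ℝ)..s, f y := by
  have hsplit := setIntegral_union (Ioc_disjoint_Ioi le_rfl) measurableSet_Ioi
    (hf.mono_set fun x hx => hx.1.le) (hf.mono_set fun x (hx : s < x) => hs.trans hx.le)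
  rw [Ioc_union_Ioi_eq_Ioi hs] at hsplit
  rw [survival, survival, hsplit, intervalIntegral.integral_of_le hs]
  ring

theorem survival_eq_one_sub_integral (hf : IntegrableOn f (Ici 0))
    (hf_one : ∫ x in Ici (0 : ℝ), f x = 1) {s : ℝ} (hs : 0 ≤ s) :
    survival f s = 1 - ∫ y in (0 : ℝ)..s, f y := by
  rw [survival_eq_sub_integral hf hs, survival, ← integral_Ici_eq_integral_Ioi, hf_one]

theorem continuousOn_survival (hf : IntegrableOn f (Ici 0)) {t : ℝ} (ht : 0 ≤ t) :
    ContinuousOn (survival f) (Icc 0 t) := by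
  have hP := intervalIntegral.continuousOn_primitive_interval (a := 0) (b := t)
    (hf.mono_set (uIcc_of_le ht ▸ Icc_subset_Ici_self))
  rw [uIcc_of_le ht] at hP
  exact (continuousOn_const.sub hP).congr fun s hs => survival_eq_sub_integral hf hs.1

theorem survival_pos {s : ℝ} (hf_pos : ∀ x ∈ Ioi s, 0 < f x) (hf : IntegrableOn f (Ioi s)) :
    0 < survival f s := by
  rw [survival, setIntegral_pos_iff_support_of_nonneg_ae
    (ae_restrict_of_forall_mem measurableSet_Ioi fun x hx => (hf_pos x hx).le) hf]
  calc (0 : ENNReal) < volume (Ioi s) := by simp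
    _ ≤ volume (Function.support f ∩ Ioi s) :=
      measure_mono fun x hx => ⟨(hf_pos x hx).ne', hx⟩

theorem integral_mul_hazardRate_sub_eq {g : ℝ → ℝ} {t : ℝ} (ht : 0 ≤ t)
    (hS : ∀ s ∈ Icc 0 t, survival f s ≠ 0)
    (hgf : IntervalIntegrable (fun x => g x * f (t - x)) volume 0 t)
    (hgS : IntervalIntegrable (fun x => g x * survival f (t - x)) volume 0 t) :
    ∫ x in (0 : ℝ)..t, g x * (hazardRate f (t - x) - hazardRate f t) * survival f (t - x) =
      laplaceConv g f t - hazardRate f t * laplaceConv g (survival f) t := by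
  rw [laplaceConv, laplaceConv, ← intervalIntegral.integral_const_mul,
    ← intervalIntegral.integral_sub hgf (hgS.const_mul _)]
  refine intervalIntegral.integral_congr fun x hx => ?_
  rw [uIcc_of_le ht] at hx
  have hSx := hS (t - x) ⟨by linarith [hx.2], by linarith [hx.1]⟩
  simp only [hazardRate]
  field_simp

end Survival

section Renewal

variable {f f' m : ℝ → ℝ}

theorem continuousOn_of_eq_add_integral (hf' : ∀ a b, IntervalIntegrable f' volume a b)
    (hf_ac : ∀ t ∈ Ici (0 : ℝ), f t = f 0 + ∫ x in (0 : ℝ)..t, f' x) : ContinuousOn f (Ici 0) :=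
  (continuous_const.add (intervalIntegral.continuous_primitive hf' 0)).continuousOn.congr hf_ac

/-- The values on `(-∞, 0)` play no role; they are set to `0` to make the function locally
integrable on all of `ℝ`. -/
noncomputable def renewalDeriv (f f' m : ℝ → ℝ) : ℝ → ℝ :=
  (Ici 0).indicator fun x => f' x + f 0 * m x + laplaceConv m f' x

theorem renewalDeriv_of_nonneg {x : ℝ} (hx : 0 ≤ x) :
    renewalDeriv f f' m x = f' x + f 0 * m x + laplaceConv m f' x :=
  indicator_of_mem hx _

theorem intervalIntegrable_renewalDeriv (hf' : ∀ a b, IntervalIntegrable f' volume a b)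
    (hm : LocallyIntegrableOn m (Ici 0)) (a b : ℝ) :
    IntervalIntegrable (renewalDeriv f f' m) volume a b := by
  set T := max (max a b) 0
  have hT : IntegrableOn (fun x => f' x + f 0 * m x + laplaceConv m f' x) (Icc 0 T) := by
    have hmT := hm.intervalIntegrable_of_Ici (le_max_right _ _ : 0 ≤ T)
    refine (intervalIntegrable_iff_integrableOn_Icc_of_le (le_max_right _ _)).1 ?_
    exact ((hf' 0 T).add (hmT.const_mul _)).add
      (laplaceConv.intervalIntegrable (le_max_right _ _) hmT (hf' 0 T))
  refine IntegrableOn.intervalIntegrable ((integrableOn_indicator_iff measurableSet_Ici).2 ?_)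
  exact hT.mono_set fun x hx => ⟨hx.1, hx.2.2.trans (le_max_left _ _)⟩

theorem integral_renewalDeriv (hf' : ∀ a b, IntervalIntegrable f' volume a b)
    (hf_ac : ∀ t ∈ Ici (0 : ℝ), f t = f 0 + ∫ x in (0 : ℝ)..t, f' x)
    (hm : LocallyIntegrableOn m (Ici 0))
    (hm_eq : ∀ t ∈ Ici (0 : ℝ), m t = f t + ∫ x in (0 : ℝ)..t, m x * f (t - x))
    {t : ℝ} (ht : 0 ≤ t) :
    ∫ x in (0 : ℝ)..t, renewalDeriv f f' m x = m t - m 0 := by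
  have hmI := hm.intervalIntegrable_of_Ici ht
  have hmf := IntervalIntegrable.mul_comp_sub_of_continuousOn ht hmI
    ((continuousOn_of_eq_add_integral hf' hf_ac).mono Icc_subset_Ici_self)
  have hconv : laplaceConv m f t = m t - f t := by
    rw [laplaceConv]; linarith [hm_eq t ht]
  have hm0 : m 0 = f 0 := by simpa using hm_eq 0 self_mem_Ici
  have hF : ∀ y ∈ Ici (0 : ℝ), ∫ z in (0 : ℝ)..y, f' z = f y - f 0 := fun y hy => by
    rw [hf_ac y hy]; ring
  calc ∫ x in (0 : ℝ)..t, renewalDeriv f f' m x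
      = ∫ x in (0 : ℝ)..t, (f' x + f 0 * m x + laplaceConv m f' x) := by
        refine intervalIntegral.integral_congr fun x hx => renewalDeriv_of_nonneg ?_
        exact (uIcc_of_le ht ▸ hx).1
    _ = (∫ x in (0 : ℝ)..t, f' x) + f 0 * (∫ x in (0 : ℝ)..t, m x) +
          laplaceConv m (fun y => ∫ z in (0 : ℝ)..y, f' z) t := by
        rw [intervalIntegral.integral_add ((hf' 0 t).add (hmI.const_mul _))
            (laplaceConv.intervalIntegrable ht hmI (hf' 0 t)),
          intervalIntegral.integral_add (hf' 0 t) (hmI.const_mul _),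
          intervalIntegral.integral_const_mul,
          laplaceConv.integral_eq_laplaceConv_primitive ht hmI (hf' 0 t)]
    _ = (f t - f 0) + f 0 * (∫ x in (0 : ℝ)..t, m x) + laplaceConv m (fun y => f y - f 0) t := by
        rw [laplaceConv.congr_right ht fun y hy => hF y hy.1, hF t ht]
    _ = m t - m 0 := by
        rw [laplaceConv.sub_const hmf hmI, hconv, hm0]; ring

theorem laplaceConv_renewalDeriv_density (hf' : ∀ a b, IntervalIntegrable f' volume a b)
    (hf_ac : ∀ t ∈ Ici (0 : ℝ), f t = f 0 + ∫ x in (0 : ℝ)..t, f' x)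
    (hf'_bdd : ∀ a b : ℝ, ∃ C : ℝ, ∀ x ∈ Icc a b, |f' x| ≤ C)
    (hm : LocallyIntegrableOn m (Ici 0))
    (hm_eq : ∀ t ∈ Ici (0 : ℝ), m t = f t + ∫ x in (0 : ℝ)..t, m x * f (t - x))
    {t : ℝ} (ht : 0 ≤ t) :
    laplaceConv (renewalDeriv f f' m) f t = renewalDeriv f f' m t - f' t - f 0 * f t := by
  set m' := renewalDeriv f f' m
  have hm'I := intervalIntegrable_renewalDeriv (f := f) hf' hm 0 t
  have hmf' : IntervalIntegrable (fun x => m x * f' (t - x)) volume 0 t :=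
    have ⟨_, hC⟩ := hf'_bdd 0 t
    IntervalIntegrable.mul_comp_sub ht (hm.intervalIntegrable_of_Ici ht) (hf' 0 t) hC
  have hm0 : m 0 = f 0 := by simpa using hm_eq 0 self_mem_Ici
  calc laplaceConv m' f t
      = laplaceConv m' (fun y => f 0 + ∫ z in (0 : ℝ)..y, f' z) t :=
        laplaceConv.congr_right ht fun y hy => hf_ac y hy.1
    _ = f 0 * (∫ x in (0 : ℝ)..t, m' x) +
          laplaceConv f' (fun y => ∫ z in (0 : ℝ)..y, m' z) t := by
        rw [laplaceConv.const_add (IntervalIntegrable.mul_comp_sub_of_continuousOn ht hm'I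
            (intervalIntegral.continuous_primitive hf' 0).continuousOn) hm'I,
          laplaceConv.primitive_comm ht hm'I (hf' 0 t)]
    _ = f 0 * (m t - m 0) + laplaceConv f' (fun y => m y - m 0) t := by
        rw [integral_renewalDeriv hf' hf_ac hm hm_eq ht,
          laplaceConv.congr_right ht fun y hy => integral_renewalDeriv hf' hf_ac hm hm_eq hy.1]
    _ = m' t - f' t - f 0 * f t := by
        rw [laplaceConv.comm, laplaceConv.sub_const_left hmf' (hf' 0 t),
          show m' t = _ from renewalDeriv_of_nonneg ht, hf_ac t ht, hm0]
        ring

theorem laplaceConv_renewalDeriv_survival (hf_int : IntegrableOn f (Ici 0))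
    (hf_one : ∫ x in Ici (0 : ℝ), f x = 1) (hf' : ∀ a b, IntervalIntegrable f' volume a b)
    (hf_ac : ∀ t ∈ Ici (0 : ℝ), f t = f 0 + ∫ x in (0 : ℝ)..t, f' x)
    (hm : LocallyIntegrableOn m (Ici 0))
    (hm_eq : ∀ t ∈ Ici (0 : ℝ), m t = f t + ∫ x in (0 : ℝ)..t, m x * f (t - x))
    {t : ℝ} (ht : 0 ≤ t) :
    laplaceConv (renewalDeriv f f' m) (survival f) t = f t - f 0 * survival f t := by
  set m' := renewalDeriv f f' m
  have hm'I := intervalIntegrable_renewalDeriv (f := f) hf' hm 0 t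
  have hfI : IntervalIntegrable f volume 0 t :=
    (hf_int.mono_set (uIcc_of_le ht ▸ Icc_subset_Ici_self)).intervalIntegrable
  have hP : ContinuousOn (fun y => ∫ z in (0 : ℝ)..y, f z) (Icc 0 t) :=
    uIcc_of_le ht ▸ intervalIntegral.continuousOn_primitive_interval
      (hf_int.mono_set (uIcc_of_le ht ▸ Icc_subset_Ici_self))
  have hmf := IntervalIntegrable.mul_comp_sub_of_continuousOn ht
    (hm.intervalIntegrable_of_Ici ht)
    ((continuousOn_of_eq_add_integral hf' hf_ac).mono Icc_subset_Ici_self)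
  have hconv : laplaceConv m f t = m t - f t := by
    rw [laplaceConv]; linarith [hm_eq t ht]
  have hm0 : m 0 = f 0 := by simpa using hm_eq 0 self_mem_Ici
  calc laplaceConv m' (survival f) t
      = laplaceConv m' (fun y => 1 - ∫ z in (0 : ℝ)..y, f z) t :=
        laplaceConv.congr_right ht fun y hy => survival_eq_one_sub_integral hf_int hf_one hy.1
    _ = (∫ x in (0 : ℝ)..t, m' x) - laplaceConv f (fun y => ∫ z in (0 : ℝ)..y, m' z) t := by
        rw [laplaceConv.const_sub
            (IntervalIntegrable.mul_comp_sub_of_continuousOn ht hm'I hP) hm'I,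
          laplaceConv.primitive_comm ht hm'I hfI, one_mul]
    _ = (m t - m 0) - laplaceConv f (fun y => m y - m 0) t := by
        rw [integral_renewalDeriv hf' hf_ac hm hm_eq ht,
          laplaceConv.congr_right ht fun y hy => integral_renewalDeriv hf' hf_ac hm hm_eq hy.1]
    _ = f t - f 0 * survival f t := by
        rw [laplaceConv.comm, laplaceConv.sub_const_left hmf hfI, hconv, hm0,
          survival_eq_one_sub_integral hf_int hf_one ht]
        ring

end Renewal

theorem renewal_density_derivative_key_identity_general
    (f f' m : ℝ → ℝ)
    (hf_pos : ∀ x ∈ Set.Ici (0 : ℝ), 0 < f x)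
    (hf_int : IntegrableOn f (Set.Ici 0))
    (hf_one : (∫ x in Set.Ici (0 : ℝ), f x) = 1)
    (hf'_intloc : ∀ a b : ℝ, IntervalIntegrable f' volume a b)
    (hf_ac : ∀ t ∈ Set.Ici (0 : ℝ), f t = f 0 + ∫ x in (0 : ℝ)..t, f' x)
    (hf'_bdd : ∀ a b : ℝ, ∃ C : ℝ, ∀ x ∈ Set.Icc a b, |f' x| ≤ C)
    (hm_loc : LocallyIntegrableOn m (Set.Ici 0))
    (hm_eq : ∀ t ∈ Set.Ici (0 : ℝ), m t = f t + ∫ x in (0 : ℝ)..t, m x * f (t - x)) :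
    ∃ m' : ℝ → ℝ,
      (∀ a b : ℝ, IntervalIntegrable m' volume a b) ∧
      (∀ t ∈ Set.Ici (0 : ℝ), m t = m 0 + ∫ x in (0 : ℝ)..t, m' x) ∧
      ∀ t : ℝ, 0 < t →
        m' t = hazardRate' f f' t * survival f t +
          ∫ x in (0 : ℝ)..t,
            m' x * (hazardRate f (t - x) - hazardRate f t) * survival f (t - x) := by
  have hm'I := intervalIntegrable_renewalDeriv (f := f) hf'_intloc hm_loc
  refine ⟨renewalDeriv f f' m, hm'I, fun t ht => ?_, fun t ht => ?_⟩
  · rw [integral_renewalDeriv hf'_intloc hf_ac hm_loc hm_eq ht]; ring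
  have hS : ∀ s ∈ Icc 0 t, survival f s ≠ 0 := fun s hs =>
    (survival_pos (fun x hx => hf_pos x (hs.1.trans hx.le))
      (hf_int.mono_set fun x hx => hs.1.trans hx.le)).ne'
  rw [integral_mul_hazardRate_sub_eq ht.le hS
      (IntervalIntegrable.mul_comp_sub_of_continuousOn ht.le (hm'I 0 t)
        ((continuousOn_of_eq_add_integral hf'_intloc hf_ac).mono Icc_subset_Ici_self))
      (IntervalIntegrable.mul_comp_sub_of_continuousOn ht.le (hm'I 0 t)
        (continuousOn_survival hf_int ht.le)),
    laplaceConv_renewalDeriv_density hf'_intloc hf_ac hf'_bdd hm_loc hm_eq ht.le,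
    laplaceConv_renewalDeriv_survival hf_int hf_one hf'_intloc hf_ac hm_loc hm_eq ht.le]
  have hSt := hS t ⟨ht.le, le_rfl⟩
  simp only [hazardRate', hazardRate]
  field_simp
  ring

/-- **Lemma 1 (key identity, Equation (4) of the paper).**
Let `f` be a probability density on `[0, ∞)` that is positive, absolutely continuous (with
a.e. derivative `f'`, so that `f t = f 0 + ∫ x in 0..t, f' x`), and such that `f'` is bounded
on every compact subinterval of `[0, ∞)`.  Let `F̄` be the survival function, `r = f / F̄` the
hazard rate, and `m` the renewal density, i.e. the solution of
`m t = f t + ∫ x in 0..t, m x * f (t - x)` for `t ≥ 0`.  Then `m` is absolutely continuous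
and a version `m'` of its derivative satisfies, for all `t > 0`,
`m' t = r' t * F̄ t + ∫ x in 0..t, m' x * (r (t - x) - r t) * F̄ (t - x)`. -/
theorem renewal_density_derivative_key_identity
    (f f' m : ℝ → ℝ)
    (hf_meas : Measurable f)
    (hf_pos : ∀ x ∈ Set.Ici (0 : ℝ), 0 < f x)
    (hf_int : IntegrableOn f (Set.Ici 0))
    (hf_one : (∫ x in Set.Ici (0 : ℝ), f x) = 1)
    (hf'_meas : Measurable f')
    (hf'_intloc : ∀ a b : ℝ, IntervalIntegrable f' volume a b)
    (hf_ac : ∀ t ∈ Set.Ici (0 : ℝ), f t = f 0 + ∫ x in (0 : ℝ)..t, f' x)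
    (hf'_bdd : ∀ a b : ℝ, ∃ C : ℝ, ∀ x ∈ Set.Icc a b, |f' x| ≤ C)
    (hm_meas : Measurable m)
    (hm_loc : LocallyIntegrableOn m (Set.Ici 0))
    (hm_eq : ∀ t ∈ Set.Ici (0 : ℝ), m t = f t + ∫ x in (0 : ℝ)..t, m x * f (t - x)) :
    ∃ m' : ℝ → ℝ,
      (∀ a b : ℝ, IntervalIntegrable m' volume a b) ∧
      (∀ t ∈ Set.Ici (0 : ℝ), m t = m 0 + ∫ x in (0 : ℝ)..t, m' x) ∧
      ∀ t : ℝ, 0 < t →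
        m' t = hazardRate' f f' t * survival f t +
          ∫ x in (0 : ℝ)..t,
            m' x * (hazardRate f (t - x) - hazardRate f t) * survival f (t - x) :=
  renewal_density_derivative_key_identity_general f f' m hf_pos hf_int hf_one hf'_intloc hf_ac
    hf'_bdd hm_loc hm_eq
end

section
/- Let f be a probability density function on [0,∞) that is positive, absolutely continuous, and such that f′ is bounded on every compact subinterval of [0,∞). Let m be the renewal density, i.e., the solution of m(t) = f(t) + ∫₀ᵗ m(x) f(t−x) dx for t ≥ 0. Then m is absolutely continuous and for all t > 0: m′(t) = f′(t) + m(t) f(0) + ∫₀ᵗ m(x) f′(t−x) dx. -/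
open MeasureTheory Set

/-!
Take for `m'` the claimed formula on `(0, ∞)` and integrate it over `[0, t]`. Fubini on the
triangle `0 < y ≤ s ≤ t` turns `∫₀ᵗ ∫₀ˢ m(y) f'(s - y) dy ds` into
`∫₀ᵗ m(y) (f(t - y) - f(0)) dy`; together with `∫₀ᵗ f' = f(t) - f(0)`, the renewal
equation identifies `∫₀ᵗ m'` with `m(t) - f(0) = m(t) - m(0)`.
-/

noncomputable def convKernel (m g : ℝ → ℝ) : ℝ × ℝ → ℝ :=
  {p : ℝ × ℝ | p.2 ≤ p.1}.indicator fun p => m p.2 * g (p.1 - p.2)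

section ConvKernel

variable {m g : ℝ → ℝ} {t : ℝ}

theorem integrable_convKernel {C : ℝ} (hm : IntegrableOn m (Ioc 0 t)) (hg : Measurable g)
    (hgC : ∀ x ∈ Icc 0 t, |g x| ≤ C) :
    Integrable (convKernel m g)
      ((volume.restrict (Ioc 0 t)).prod (volume.restrict (Ioc 0 t))) := by
  have hmeas : AEStronglyMeasurable (convKernel m g)
      ((volume.restrict (Ioc 0 t)).prod (volume.restrict (Ioc 0 t))) :=
    (hm.aestronglyMeasurable.comp_snd.mul
      (hg.comp (measurable_fst.sub measurable_snd)).aestronglyMeasurable).indicator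
      (measurableSet_le measurable_snd measurable_fst)
  have hmem : ∀ᵐ p ∂(volume.restrict (Ioc 0 t)).prod (volume.restrict (Ioc 0 t)),
      p ∈ Ioc 0 t ×ˢ Ioc 0 t := by
    rw [Measure.prod_restrict]
    exact ae_restrict_mem (measurableSet_Ioc.prod measurableSet_Ioc)
  refine ((integrable_const |C|).mul_prod hm.norm).mono' hmeas ?_
  filter_upwards [hmem] with ⟨s, y⟩ ⟨hs, hy⟩
  simp only [convKernel, indicator_apply, mem_ofPred_eq]
  split_ifs with hys
  · rw [norm_mul, Real.norm_eq_abs (g _), mul_comm]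
    have hsy : s - y ∈ Icc 0 t := ⟨sub_nonneg.2 hys, by linarith [hs.2, hy.1]⟩
    exact mul_le_mul_of_nonneg_right ((hgC _ hsy).trans (le_abs_self C)) (norm_nonneg _)
  · simp only [norm_zero]
    positivity

theorem setIntegral_convKernel_left {s : ℝ} (hs : s ∈ Ioc 0 t) :
    ∫ y in Ioc 0 t, convKernel m g (s, y) = ∫ y in (0 : ℝ)..s, m y * g (s - y) := by
  change ∫ y in Ioc 0 t, (Iic s).indicator (fun y => m y * g (s - y)) y = _
  rw [setIntegral_indicator measurableSet_Iic, Ioc_inter_Iic, inf_eq_right.2 hs.2,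
    intervalIntegral.integral_of_le hs.1.le]

theorem setIntegral_convKernel_right {y : ℝ} (hy : y ∈ Ioc 0 t) :
    ∫ s in Ioc 0 t, convKernel m g (s, y) = m y * ∫ u in (0 : ℝ)..(t - y), g u := by
  change ∫ s in Ioc 0 t, (Ici y).indicator (fun s => m y * g (s - y)) s = _
  have hinter : Ioc 0 t ∩ Ici y = Icc y t := by
    ext s
    simp only [mem_inter_iff, mem_Ioc, mem_Ici, mem_Icc]
    constructor
    · rintro ⟨⟨-, hst⟩, hys⟩
      exact ⟨hys, hst⟩
    · rintro ⟨hys, hst⟩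
      exact ⟨⟨hy.1.trans_le hys, hst⟩, hys⟩
  rw [setIntegral_indicator measurableSet_Ici, hinter, integral_Icc_eq_integral_Ioc,
    ← intervalIntegral.integral_of_le hy.2, intervalIntegral.integral_const_mul,
    intervalIntegral.integral_comp_sub_right (fun u => g u) y, sub_self]

theorem integrableOn_intervalIntegral_mul_comp_sub {C : ℝ} (hm : IntegrableOn m (Ioc 0 t))
    (hg : Measurable g) (hgC : ∀ x ∈ Icc 0 t, |g x| ≤ C) :
    IntegrableOn (fun s => ∫ y in (0 : ℝ)..s, m y * g (s - y)) (Ioc 0 t) :=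
  IntegrableOn.congr_fun (integrable_convKernel hm hg hgC).integral_prod_left
    (fun _ hs => setIntegral_convKernel_left hs) measurableSet_Ioc

theorem integrableOn_mul_intervalIntegral_comp_sub {C : ℝ} (hm : IntegrableOn m (Ioc 0 t))
    (hg : Measurable g) (hgC : ∀ x ∈ Icc 0 t, |g x| ≤ C) :
    IntegrableOn (fun y => m y * ∫ u in (0 : ℝ)..(t - y), g u) (Ioc 0 t) :=
  IntegrableOn.congr_fun (integrable_convKernel hm hg hgC).integral_prod_right
    (fun _ hy => setIntegral_convKernel_right hy) measurableSet_Ioc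

theorem integral_intervalIntegral_mul_comp_sub {C : ℝ} (ht : 0 ≤ t)
    (hm : IntegrableOn m (Ioc 0 t)) (hg : Measurable g) (hgC : ∀ x ∈ Icc 0 t, |g x| ≤ C) :
    ∫ s in (0 : ℝ)..t, ∫ y in (0 : ℝ)..s, m y * g (s - y) =
      ∫ y in (0 : ℝ)..t, m y * ∫ u in (0 : ℝ)..(t - y), g u := by
  rw [intervalIntegral.integral_of_le ht, intervalIntegral.integral_of_le ht]
  calc ∫ s in Ioc 0 t, ∫ y in (0 : ℝ)..s, m y * g (s - y)
      = ∫ s in Ioc 0 t, ∫ y in Ioc 0 t, convKernel m g (s, y) :=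
        setIntegral_congr_fun measurableSet_Ioc fun _ hs => (setIntegral_convKernel_left hs).symm
    _ = ∫ y in Ioc 0 t, ∫ s in Ioc 0 t, convKernel m g (s, y) :=
        integral_integral_swap (integrable_convKernel hm hg hgC)
    _ = ∫ y in Ioc 0 t, m y * ∫ u in (0 : ℝ)..(t - y), g u :=
        setIntegral_congr_fun measurableSet_Ioc fun _ hy => setIntegral_convKernel_right hy

end ConvKernel

theorem intervalIntegrable_indicator_Ioi {h : ℝ → ℝ} (hh : ∀ b, IntegrableOn h (Ioc 0 b))
    (a b : ℝ) : IntervalIntegrable ((Ioi 0).indicator h) volume a b := by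
  rw [intervalIntegrable_iff, integrableOn_indicator_iff measurableSet_Ioi]
  exact (hh (max a b)).mono_set fun x ⟨hx0, hx⟩ => ⟨hx0, hx.2⟩

theorem intervalIntegral_indicator_Ioi {h : ℝ → ℝ} {t : ℝ} (ht : 0 ≤ t) :
    ∫ s in (0 : ℝ)..t, (Ioi 0).indicator h s = ∫ s in (0 : ℝ)..t, h s := by
  refine intervalIntegral.integral_congr_ae (Filter.Eventually.of_forall fun s hs => ?_)
  rw [uIoc_of_le ht] at hs
  exact indicator_of_mem hs.1 h

theorem renewal_density_eq_add_integral {f f' m : ℝ → ℝ} {t C : ℝ} (ht : 0 ≤ t)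
    (hf'_meas : Measurable f') (hf'_int : IntervalIntegrable f' volume 0 t)
    (hf'C : ∀ x ∈ Icc 0 t, |f' x| ≤ C)
    (hf_ac : ∀ u ∈ Ici (0 : ℝ), f u = f 0 + ∫ x in (0 : ℝ)..u, f' x)
    (hm : IntegrableOn m (Ioc 0 t))
    (hm_eq : ∀ u ∈ Ici (0 : ℝ), m u = f u + ∫ x in (0 : ℝ)..u, m x * f (u - x)) :
    m t = m 0 +
      ∫ s in (0 : ℝ)..t, (f' s + m s * f 0 + ∫ y in (0 : ℝ)..s, m y * f' (s - y)) := by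
  have hm_ii : IntervalIntegrable m volume 0 t :=
    (intervalIntegrable_iff_integrableOn_Ioc_of_le ht).2 hm
  have hconv_ii := (intervalIntegrable_iff_integrableOn_Ioc_of_le ht).2
    (integrableOn_intervalIntegral_mul_comp_sub hm hf'_meas hf'C)
  have hswap_ii := (intervalIntegrable_iff_integrableOn_Ioc_of_le ht).2
    (integrableOn_mul_intervalIntegral_comp_sub hm hf'_meas hf'C)
  have hm_t : m t = f t + ∫ y in (0 : ℝ)..t,
      (m y * f 0 + m y * ∫ u in (0 : ℝ)..(t - y), f' u) := by
    rw [hm_eq t ht]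
    congr 1
    refine intervalIntegral.integral_congr fun y hy => ?_
    rw [uIcc_of_le ht] at hy
    rw [hf_ac (t - y) (sub_nonneg.2 hy.2), mul_add]
  have hm_0 : m 0 = f 0 := by simpa using hm_eq 0 self_mem_Ici
  have hf_t := hf_ac t ht
  rw [intervalIntegral.integral_add (hf'_int.add (hm_ii.mul_const _)) hconv_ii,
    intervalIntegral.integral_add hf'_int (hm_ii.mul_const _),
    integral_intervalIntegral_mul_comp_sub ht hm hf'_meas hf'C]
  rw [intervalIntegral.integral_add (hm_ii.mul_const _) hswap_ii] at hm_t
  simp only [intervalIntegral.integral_mul_const] at hm_t ⊢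
  linarith

theorem renewal_density_derivative_eq_general
    (f f' m : ℝ → ℝ)
    (hf'_meas : Measurable f')
    (hf'_intloc : ∀ a b : ℝ, IntervalIntegrable f' volume a b)
    (hf_ac : ∀ t ∈ Set.Ici (0 : ℝ), f t = f 0 + ∫ x in (0 : ℝ)..t, f' x)
    (hf'_bdd : ∀ a b : ℝ, ∃ C : ℝ, ∀ x ∈ Set.Icc a b, |f' x| ≤ C)
    (hm_loc : LocallyIntegrableOn m (Set.Ici 0))
    (hm_eq : ∀ t ∈ Set.Ici (0 : ℝ), m t = f t + ∫ x in (0 : ℝ)..t, m x * f (t - x)) :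
    ∃ m' : ℝ → ℝ,
      (∀ a b : ℝ, IntervalIntegrable m' volume a b) ∧
      (∀ t ∈ Set.Ici (0 : ℝ), m t = m 0 + ∫ x in (0 : ℝ)..t, m' x) ∧
      ∀ t : ℝ, 0 < t →
        m' t = f' t + m t * f 0 + ∫ x in (0 : ℝ)..t, m x * f' (t - x) := by
  have hm_int (b : ℝ) : IntegrableOn m (Ioc 0 b) :=
    (hm_loc.integrableOn_compact_subset Icc_subset_Ici_self isCompact_Icc).mono_set
      Ioc_subset_Icc_self
  -- `m` is only integrable near `[0, ∞)`, so `m'` is cut off to `0` on `(-∞, 0]`.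
  refine ⟨(Ioi 0).indicator fun s => f' s + m s * f 0 + ∫ x in (0 : ℝ)..s, m x * f' (s - x),
    intervalIntegrable_indicator_Ioi fun b => ?_, fun t ht => ?_,
    fun t ht => indicator_of_mem ht _⟩
  · obtain ⟨C, hC⟩ := hf'_bdd 0 b
    exact ((hf'_intloc 0 b).1.add ((hm_int b).mul_const _)).add
      (integrableOn_intervalIntegral_mul_comp_sub (hm_int b) hf'_meas hC)
  · obtain ⟨C, hC⟩ := hf'_bdd 0 t
    rw [intervalIntegral_indicator_Ioi ht]
    exact renewal_density_eq_add_integral ht hf'_meas (hf'_intloc 0 t) hC hf_ac (hm_int t) hm_eq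

/-- **Equation (5) of the paper.**
Let `f` be a probability density on `[0, ∞)` that is positive, absolutely continuous (with
a.e. derivative `f'`, so that `f t = f 0 + ∫ x in 0..t, f' x`), and such that `f'` is bounded
on every compact subinterval of `[0, ∞)`.  Let `m` be the renewal density, i.e. the solution
of `m t = f t + ∫ x in 0..t, m x * f (t - x)` for `t ≥ 0`.  Then `m` is absolutely continuous
and a version `m'` of its derivative satisfies, for all `t > 0`,
`m' t = f' t + m t * f 0 + ∫ x in 0..t, m x * f' (t - x)`. -/
theorem renewal_density_derivative_eq
    (f f' m : ℝ → ℝ)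
    (hf_meas : Measurable f)
    (hf_pos : ∀ x ∈ Set.Ici (0 : ℝ), 0 < f x)
    (hf_int : IntegrableOn f (Set.Ici 0))
    (hf_one : (∫ x in Set.Ici (0 : ℝ), f x) = 1)
    (hf'_meas : Measurable f')
    (hf'_intloc : ∀ a b : ℝ, IntervalIntegrable f' volume a b)
    (hf_ac : ∀ t ∈ Set.Ici (0 : ℝ), f t = f 0 + ∫ x in (0 : ℝ)..t, f' x)
    (hf'_bdd : ∀ a b : ℝ, ∃ C : ℝ, ∀ x ∈ Set.Icc a b, |f' x| ≤ C)
    (hm_meas : Measurable m)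
    (hm_loc : LocallyIntegrableOn m (Set.Ici 0))
    (hm_eq : ∀ t ∈ Set.Ici (0 : ℝ), m t = f t + ∫ x in (0 : ℝ)..t, m x * f (t - x)) :
    ∃ m' : ℝ → ℝ,
      (∀ a b : ℝ, IntervalIntegrable m' volume a b) ∧
      (∀ t ∈ Set.Ici (0 : ℝ), m t = m 0 + ∫ x in (0 : ℝ)..t, m' x) ∧
      ∀ t : ℝ, 0 < t →
        m' t = f' t + m t * f 0 + ∫ x in (0 : ℝ)..t, m x * f' (t - x) :=
  renewal_density_derivative_eq_general f f' m hf'_meas hf'_intloc hf_ac hf'_bdd hm_loc hm_eq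
end

section
/- There exists an absolutely continuous probability distribution on [0,∞) with positive density f whose hazard rate r(t) = f(t)/F̄(t) is strictly increasing on some nondegenerate interval (so the distribution is not DFR), and yet whose renewal density m, i.e., the solution of m(t) = f(t) + ∫₀ᵗ m(x) f(t−x) dx for t ≥ 0, is decreasing on [0,∞), so that the renewal function M(t) = ∫₀ᵗ m(x) dx is concave. In particular, concavity of the renewal function does not imply that the inter-renewal distribution is DFR. -/
open MeasureTheory Set

/-! The density `f = e^{-6t} - 2e^{-12t} + 18e^{-18t}` has the rational Laplace transform
`f̂(s) = 1/(s+6) - 2/(s+12) + 18/(s+18)`, hence so does the renewal density, `m̂ = f̂ / (1 - f̂)`.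
Its poles are `0` (residue `1/μ = 72/5`, `μ = 5/72` the mean of `f`), `-9` and `-10`, which gives
`m = 72/5 + 9e^{-9t} - (32/5)e^{-10t}`, a decreasing function; the renewal equation is then checked
directly, convolving exponentials term by term. With `u = e^{-6t}` the hazard rate is
`6(1 - 2u + 18u²)/(1 - u + 6u²)`, which decreases in `u` on `(0, 1/25]`, so it increases for
`t ≥ 4`. This rules out log-convexity of `F̄`, since `(log F̄)' = -r` would have to increase. -/

open Real

theorem hasDerivAt_survival {f : ℝ → ℝ} {c t : ℝ} (hf : ContinuousOn f (Ioi c))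
    (hfi : IntegrableOn f (Ioi c)) (ht : c < t) : HasDerivAt (survival f) (-f t) t := by
  have heq : (fun x => (∫ y in Ioi c, f y) - ∫ y in c..x, f y) =ᶠ[nhds t] survival f := by
    filter_upwards [Ioi_mem_nhds ht] with x hx
    rw [← intervalIntegral.integral_interval_add_Ioi hfi (hfi.mono_set (Ioi_subset_Ioi hx.le)),
      survival, add_sub_cancel_left]
  refine HasDerivAt.congr_of_eventuallyEq ?_ heq.symm
  have hint : IntervalIntegrable f volume c t :=
    (intervalIntegrable_iff_integrableOn_Ioc_of_le ht.le).2 (hfi.mono_set Ioc_subset_Ioi_self)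
  simpa using (intervalIntegral.integral_hasDerivAt_right hint
    (hf.stronglyMeasurableAtFilter isOpen_Ioi t ht) (hf.continuousAt (Ioi_mem_nhds ht))).const_sub _

theorem not_convexOn_log_survival_of_strictMonoOn_hazardRate {f : ℝ → ℝ} {c a b : ℝ}
    (hf : ContinuousOn f (Ioi c)) (hfi : IntegrableOn f (Ioi c))
    (hS : ∀ t ∈ Ioi c, 0 < survival f t) (hca : c ≤ a) (hab : a < b)
    (hr : StrictMonoOn (hazardRate f) (Icc a b)) :
    ¬ ConvexOn ℝ (Ici c) (fun t => log (survival f t)) := by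
  intro hconv
  have hderiv : ∀ t ∈ Ioi c, HasDerivAt (fun t => log (survival f t)) (-hazardRate f t) t :=
    fun t ht => by
      simpa [hazardRate, neg_div] using (hasDerivAt_survival hf hfi ht).log (hS t ht).ne'
  have hmono : MonotoneOn (deriv fun t => log (survival f t)) (Ioi c) :=
    (hconv.subset Ioi_subset_Ici_self (convex_Ioi c)).monotoneOn_deriv
      fun t ht => (hderiv t ht).differentiableAt
  obtain ⟨m, ham, hmb⟩ := exists_between hab
  have hm : m ∈ Ioi c := hca.trans_lt ham
  have hb : b ∈ Ioi c := hm.trans hmb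
  have hlt := hr ⟨ham.le, hmb.le⟩ ⟨hab.le, le_rfl⟩ hmb
  have hle := hmono hm hb hmb.le
  rw [(hderiv m hm).deriv, (hderiv b hb).deriv] at hle
  linarith

theorem concaveOn_integral_of_antitoneOn {m : ℝ → ℝ} {s : Set ℝ} (hm : Continuous m)
    (hs : Convex ℝ s) (hanti : AntitoneOn m s) (a : ℝ) :
    ConcaveOn ℝ s (fun t => ∫ x in a..t, m x) := by
  have hderiv := hm.integral_hasStrictDerivAt a
  refine AntitoneOn.concaveOn_of_deriv hs ?_ ?_ ?_
  · exact fun t _ => (hderiv t).hasDerivAt.continuousAt.continuousWithinAt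
  · exact fun t _ => (hderiv t).hasDerivAt.differentiableAt.differentiableWithinAt
  · rw [funext (Continuous.deriv_integral m hm a)]
    exact hanti.mono interior_subset

noncomputable def expSum {ι : Type*} [Fintype ι] (c r : ι → ℝ) (x : ℝ) : ℝ :=
  ∑ i, c i * exp (-r i * x)

section expSum

variable {ι κ : Type*} [Fintype ι] [Fintype κ]

theorem continuous_expSum (c r : ι → ℝ) : Continuous (expSum c r) := by
  unfold expSum; fun_prop

theorem hasDerivAt_expSum (c r : ι → ℝ) (x : ℝ) :
    HasDerivAt (expSum c r) (-expSum (c * r) r x) x := by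
  have h := HasDerivAt.fun_sum (u := Finset.univ) fun i _ =>
    (((hasDerivAt_id x).const_mul (-r i)).exp).const_mul (c i)
  simp only [id, mul_one] at h
  refine h.congr_deriv ?_
  simp only [expSum, Pi.mul_apply, ← Finset.sum_neg_distrib]
  exact Finset.sum_congr rfl fun i _ => by ring

theorem integrableOn_Ioi_expSum {r : ι → ℝ} (hr : ∀ i, 0 < r i) (c : ι → ℝ) (t : ℝ) :
    IntegrableOn (expSum c r) (Ioi t) :=
  integrable_finsetSum _ fun i _ => (exp_neg_integrableOn_Ioi t (hr i)).const_mul (c i)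

theorem survival_expSum {r : ι → ℝ} (hr : ∀ i, 0 < r i) (c : ι → ℝ) (t : ℝ) :
    survival (expSum c r) t = expSum (c / r) r t := by
  simp only [survival, expSum]
  rw [integral_finsetSum _ fun i _ =>
    (exp_neg_integrableOn_Ioi t (hr i)).const_mul (c i)]
  refine Finset.sum_congr rfl fun i _ => ?_
  rw [integral_const_mul, integral_exp_mul_Ioi (neg_lt_zero.2 (hr i)), Pi.div_apply]
  field_simp [(hr i).ne']

theorem integral_exp_mul_exp_sub {α β : ℝ} (h : α ≠ β) (t : ℝ) :
    ∫ x in (0 : ℝ)..t, exp (-α * x) * exp (-β * (t - x)) =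
      (exp (-α * t) - exp (-β * t)) / (β - α) := by
  have hβα : β - α ≠ 0 := sub_ne_zero.2 h.symm
  have hexp : ∀ x, exp (-α * x) * exp (-β * (t - x)) = exp ((β - α) * x + -β * t) := fun x => by
    rw [← exp_add]; ring_nf
  simp_rw [hexp]
  rw [intervalIntegral.integral_comp_mul_add (fun x => exp x) hβα, integral_exp, smul_eq_mul]
  field_simp
  ring_nf

theorem integral_expSum_mul_expSum_sub {α : ι → ℝ} {β : κ → ℝ} (h : ∀ i j, α i ≠ β j)
    (a : ι → ℝ) (b : κ → ℝ) (t : ℝ) :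
    ∫ x in (0 : ℝ)..t, expSum a α x * expSum b β (t - x) =
      ∑ i, ∑ j, a i * b j * ((exp (-α i * t) - exp (-β j * t)) / (β j - α i)) := by
  simp_rw [expSum, Finset.sum_mul_sum, ← integral_exp_mul_exp_sub (h _ _)]
  rw [intervalIntegral.integral_finsetSum fun i _ => ?_]
  · refine Finset.sum_congr rfl fun i _ => ?_
    rw [intervalIntegral.integral_finsetSum fun j _ => ?_]
    · refine Finset.sum_congr rfl fun j _ => ?_
      rw [← intervalIntegral.integral_const_mul]
      congr 1; ext x; ring
    · exact Continuous.intervalIntegrable (by fun_prop) _ _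
  · exact Continuous.intervalIntegrable (by fun_prop) _ _

end expSum

namespace BrownConjecture

noncomputable def density : ℝ → ℝ := expSum ![1, -2, 18] ![6, 12, 18]

noncomputable def renewalDensity : ℝ → ℝ := expSum ![72 / 5, 9, -32 / 5] ![0, 9, 10]

theorem density_rates_pos : ∀ i, 0 < (![6, 12, 18] : Fin 3 → ℝ) i := by
  intro i; fin_cases i <;> norm_num

theorem density_eq (x : ℝ) :
    density x = exp (-6 * x) * (1 - 2 * exp (-6 * x) + 18 * exp (-6 * x) ^ 2) := by
  have h2 : exp (-12 * x) = exp (-6 * x) ^ 2 := by rw [← exp_nat_mul]; ring_nf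
  have h3 : exp (-18 * x) = exp (-6 * x) ^ 3 := by rw [← exp_nat_mul]; ring_nf
  simp only [density, expSum, Fin.sum_univ_three, Matrix.cons_val_zero,
    Matrix.cons_val_one, Matrix.cons_val_two, Matrix.tail_cons, Matrix.head_cons, h2, h3]
  ring

theorem survival_density (t : ℝ) :
    survival density t = exp (-6 * t) * (1 - exp (-6 * t) + 6 * exp (-6 * t) ^ 2) / 6 := by
  have h2 : exp (-12 * t) = exp (-6 * t) ^ 2 := by rw [← exp_nat_mul]; ring_nf
  have h3 : exp (-18 * t) = exp (-6 * t) ^ 3 := by rw [← exp_nat_mul]; ring_nf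
  rw [density, survival_expSum density_rates_pos]
  simp only [expSum, Fin.sum_univ_three, Pi.div_apply, Matrix.cons_val_zero,
    Matrix.cons_val_one, Matrix.cons_val_two, Matrix.tail_cons, Matrix.head_cons, h2, h3]
  ring

theorem density_pos (x : ℝ) : 0 < density x := by
  rw [density_eq]
  have := exp_pos (-6 * x)
  nlinarith [sq_nonneg (exp (-6 * x) - 1 / 18)]

theorem survival_density_pos (t : ℝ) : 0 < survival density t := by
  rw [survival_density]
  have := exp_pos (-6 * t)
  nlinarith [sq_nonneg (exp (-6 * t) - 1 / 12)]

theorem hazardRate_density (x : ℝ) :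
    hazardRate density x = 6 * (1 - 2 * exp (-6 * x) + 18 * exp (-6 * x) ^ 2) /
      (1 - exp (-6 * x) + 6 * exp (-6 * x) ^ 2) := by
  have := exp_pos (-6 * x)
  have hq : 0 < 1 - exp (-6 * x) + 6 * exp (-6 * x) ^ 2 := by
    nlinarith [sq_nonneg (exp (-6 * x) - 1 / 12)]
  rw [hazardRate, density_eq, survival_density]
  field_simp

theorem strictMonoOn_hazardRate_density : StrictMonoOn (hazardRate density) (Ici 4) := by
  intro x hx y hy hxy
  simp only [hazardRate_density]
  set u := exp (-6 * x)
  set v := exp (-6 * y)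
  have hv : 0 < v := exp_pos _
  have hvu : v < u := exp_lt_exp.2 (by linarith)
  have hu : u ≤ 1 / 25 := by
    calc u ≤ exp (-24) := exp_le_exp.2 (by linarith [mem_Ici.1 hx])
      _ = (exp 24)⁻¹ := exp_neg 24
      _ ≤ 1 / 25 := by
        rw [one_div]; exact inv_anti₀ (by norm_num) (by linarith [add_one_le_exp (24 : ℝ)])
  have key : 6 * (1 - 2 * v + 18 * v ^ 2) * (1 - u + 6 * u ^ 2) -
      6 * (1 - 2 * u + 18 * u ^ 2) * (1 - v + 6 * v ^ 2) =
      6 * (u - v) * (1 - 12 * (u + v) + 6 * u * v) := by ring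
  have hpos : 0 < 6 * (u - v) * (1 - 12 * (u + v) + 6 * u * v) :=
    mul_pos (by linarith) (by nlinarith)
  rw [div_lt_div_iff₀ (by nlinarith) (by nlinarith)]
  linarith

theorem integral_density : ∫ x in Ici (0 : ℝ), density x = 1 := by
  rw [integral_Ici_eq_integral_Ioi, ← survival, survival_density]
  norm_num

theorem renewal_equation (t : ℝ) :
    renewalDensity t = density t + ∫ x in (0 : ℝ)..t, renewalDensity x * density (t - x) := by
  rw [renewalDensity, density, integral_expSum_mul_expSum_sub fun i j => by
    fin_cases i <;> fin_cases j <;> norm_num]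
  simp only [expSum, Fin.sum_univ_three, Matrix.cons_val_zero,
    Matrix.cons_val_one, Matrix.cons_val_two, Matrix.tail_cons, Matrix.head_cons]
  ring

theorem antitoneOn_renewalDensity : AntitoneOn renewalDensity (Ici 0) := by
  refine antitoneOn_of_hasDerivWithinAt_nonpos (convex_Ici 0) (continuous_expSum _ _).continuousOn
    (fun x _ => (hasDerivAt_expSum _ _ x).hasDerivWithinAt) fun x hx => ?_
  rw [interior_Ici, mem_Ioi] at hx
  have : exp (-10 * x) ≤ exp (-9 * x) := exp_le_exp.2 (by linarith)
  simp only [expSum, Fin.sum_univ_three, Pi.mul_apply, Matrix.cons_val_zero, Matrix.cons_val_one,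
    Matrix.cons_val_two, Matrix.tail_cons, Matrix.head_cons]
  nlinarith [exp_pos (-9 * x)]

end BrownConjecture

open BrownConjecture in
/-- **Main conclusion of the paper: Brown's conjecture is false.**
There is an absolutely continuous probability distribution on `[0, ∞)` with positive
density `f` whose hazard rate `r = f / F̄` is strictly increasing on some nondegenerate
interval — in particular the distribution is not DFR, i.e. its survival function is not
log-convex on `[0, ∞)` — and yet whose renewal density `m` (the solution of
`m t = f t + ∫ x in 0..t, m x * f (t - x)` for `t ≥ 0`) is decreasing on `[0, ∞)`, so
that the renewal function `M t = ∫ x in 0..t, m x` is concave on `[0, ∞)`. -/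
theorem concave_renewal_function_not_DFR :
    ∃ (f m : ℝ → ℝ) (a b : ℝ),
      (∀ x ∈ Set.Ici (0 : ℝ), 0 < f x) ∧
      ContinuousOn f (Set.Ici 0) ∧
      IntegrableOn f (Set.Ici 0) ∧
      (∫ x in Set.Ici (0 : ℝ), f x) = 1 ∧
      0 ≤ a ∧ a < b ∧
      StrictMonoOn (hazardRate f) (Set.Icc a b) ∧
      ¬ ConvexOn ℝ (Set.Ici 0) (fun t => Real.log (survival f t)) ∧
      LocallyIntegrableOn m (Set.Ici 0) ∧
      (∀ t ∈ Set.Ici (0 : ℝ), m t = f t + ∫ x in (0 : ℝ)..t, m x * f (t - x)) ∧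
      AntitoneOn m (Set.Ici 0) ∧
      ConcaveOn ℝ (Set.Ici 0) (fun t => ∫ x in (0 : ℝ)..t, m x) := by
  have hf : Continuous density := continuous_expSum _ _
  have hm : Continuous renewalDensity := continuous_expSum _ _
  have hfi : IntegrableOn density (Ioi 0) := integrableOn_Ioi_expSum density_rates_pos _ 0
  have hr : StrictMonoOn (hazardRate density) (Icc 4 5) :=
    strictMonoOn_hazardRate_density.mono Icc_subset_Ici_self
  refine ⟨density, renewalDensity, 4, 5, fun x _ => density_pos x, hf.continuousOn,
    (integrableOn_Ici_iff_integrableOn_Ioi).2 hfi, integral_density, by norm_num, by norm_num, hr,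
    not_convexOn_log_survival_of_strictMonoOn_hazardRate hf.continuousOn hfi
      (fun t _ => survival_density_pos t) (by norm_num) (by norm_num) hr,
    hm.locallyIntegrable.locallyIntegrableOn _, fun t _ => renewal_equation t,
    antitoneOn_renewalDensity,
    concaveOn_integral_of_antitoneOn hm (convex_Ici 0) antitoneOn_renewalDensity 0⟩
end

section
/- Let f be a positive probability density function on [0,∞), continuous on [0,∞) and piecewise continuously differentiable, with hazard rate r(t) = f(t)/F̄(t), and fix 0 < t₁ < t₃. Assume that for every t > t₃ and every x with 0 < x < t one has r(t−x) ≥ r(t), with strict inequality whenever t − x < t₁. Let m be the renewal density, i.e., the solution of m(t) = f(t) + ∫₀ᵗ m(x) f(t−x) dx for t ≥ 0, and assume m′(x) < 0 for all x ∈ (0, t₃) and r′(t) ≤ 0 for t ≥ t₃. Then m′(t) < 0 for all t > t₃; in particular, m is strictly decreasing on [t₃, ∞). -/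
open MeasureTheory Set

/-- `f` is piecewise continuously differentiable on `s`: off a locally finite exceptional
set `P`, it has a continuous derivative. -/
def PiecewiseC1On (f : ℝ → ℝ) (s : Set ℝ) : Prop :=
  ∃ P : Set ℝ, (∀ K : Set ℝ, IsCompact K → (P ∩ K).Finite) ∧
    ∃ g : ℝ → ℝ, ContinuousOn g (s \ P) ∧ ∀ t ∈ s \ P, HasDerivAt f (g t) t

/-!
For every `S ≥ 0`, the renewal equation together with `∫₀ᵗ m(x) F̄(t - x) dx = F(t)` gives
`m t = r S + ψ_S t + ∫₀ᵗ ψ_S(x) m(t - x) dx` with `ψ_S = f - r S · F̄ = (r - r S) F̄`, which is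
nonnegative on `(0, S)` and vanishes at `S`. Subtracting this identity at `S` and at a slightly
smaller `a ≥ t₃` bounds `m S - m a` by `∫₀ᵃ ψ_S(x) (m(S - x) - m(a - x)) dx`. A Grönwall argument
applied to the positive part of the increments of `m` shows that `m` is nonincreasing on `[t₃, ∞)`.
At `T > t₃` the same bound with `a = T - h`, `h → 0⁺`, gives `m'(T) ≤ c (m(T - α) - m(T - β))`,
where `c > 0` is the minimum of `ψ_T` on `[α, β] ⊂ (0, t₁)`. This is negative once `m` is known to
decrease strictly on `[T - β, T - α]`, which propagates from `(0, t₃]` in steps of length `t₁`.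
-/

open Filter Topology

theorem eq_zero_of_le_mul_integral {w : ℝ → ℝ} {A B C : ℝ} (hw : ContinuousOn w (Icc A B))
    (hw₀ : ∀ x ∈ Icc A B, 0 ≤ w x) (hle : ∀ x ∈ Icc A B, w x ≤ C * ∫ y in A..x, w y) :
    ∀ x ∈ Icc A B, w x = 0 := by
  set W : ℝ → ℝ := fun x => ∫ y in A..x, w y with hW
  have hW₀ : ∀ x ∈ Icc A B, 0 ≤ W x := fun x hx =>
    intervalIntegral.integral_nonneg hx.1 fun y hy => hw₀ y ⟨hy.1, hy.2.trans hx.2⟩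
  have hWc : ContinuousOn W (Icc A B) := by
    rcases le_or_gt A B with hAB | hAB
    · rw [← uIcc_of_le hAB] at hw ⊢
      exact intervalIntegral.continuousOn_primitive_interval
        (hw.integrableOn_compact isCompact_uIcc)
    · simp [Icc_eq_empty_of_lt hAB]
  have hW' : ∀ x ∈ Ico A B, HasDerivWithinAt W (w x) (Ici x) x := fun x hx => by
    have hmem : Icc A B ∈ 𝓝[>] x := Icc_mem_nhdsGT_of_mem hx
    exact intervalIntegral.integral_hasDerivWithinAt_right
      ((hw.mono (Icc_subset_Icc_right hx.2.le)).intervalIntegrable_of_Icc hx.1)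
      ((hw.stronglyMeasurableAtFilter_nhdsWithin measurableSet_Icc x).filter_mono
        (nhdsWithin_le_of_mem hmem))
      ((hw x (Ico_subset_Icc_self hx)).mono_of_mem_nhdsWithin hmem)
  have hWzero := eq_zero_of_abs_deriv_le_mul_abs_self_of_eq_zero_right (K := C) hWc hW'
    (by simp [hW]) fun x hx => by
      rw [Real.norm_of_nonneg (hw₀ x (Ico_subset_Icc_self hx)),
        Real.norm_of_nonneg (hW₀ x (Ico_subset_Icc_self hx))]
      exact hle x (Ico_subset_Icc_self hx)
  intro x hx
  have hWx : ∫ y in A..x, w y = 0 := hWzero x hx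
  exact le_antisymm (by simpa [hWx] using hle x hx) (hw₀ x hx)

theorem antitoneOn_Ici_of_le_of_le_add {g : ℝ → ℝ} {a₀ δ : ℝ} (hδ : 0 < δ)
    (h : ∀ a b, a₀ ≤ a → a ≤ b → b ≤ a + δ → g b ≤ g a) : AntitoneOn g (Ici a₀) := by
  have key : ∀ n : ℕ, ∀ a b, a₀ ≤ a → a ≤ b → b ≤ a + n * δ → g b ≤ g a := by
    intro n
    induction n with
    | zero =>
      intro a b _ hab hb
      rw [le_antisymm (by simpa using hb) hab]
    | succ n ih =>
      intro a b ha hab hb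
      have hnδ : 0 ≤ n * δ := by positivity
      push_cast at hb
      rcases le_total b (a + n * δ) with hb' | hb'
      · exact ih a b ha hab hb'
      · calc g b ≤ g (a + n * δ) := h _ _ (by linarith) hb' (by linarith)
          _ ≤ g a := ih a _ ha (by linarith) le_rfl
  intro a ha b _ hab
  obtain ⟨n, hn⟩ := exists_nat_gt ((b - a) / δ)
  rw [div_lt_iff₀ hδ] at hn
  exact key n a b ha hab (by linarith)

theorem antitoneOn_Ici_of_forall_Ioo_le {g : ℝ → ℝ} {t₃ : ℝ} (ht₃ : 0 < t₃)
    (hg : ∀ t, t₃ < t → ∀ x ∈ Ioo 0 t, g t ≤ g x) : AntitoneOn g (Ici t₃) := by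
  intro u hu v _ huv
  rcases huv.eq_or_lt with rfl | huv
  · rfl
  · exact hg v (lt_of_le_of_lt hu huv) u ⟨ht₃.trans_le hu, huv⟩

theorem strictAntiOn_Ioc_of_deriv_neg {g : ℝ → ℝ} {t₃ L : ℝ} (ht₃ : 0 < t₃) (hL : t₃ ≤ L)
    (hg : ContinuousOn g (Ioi 0)) (h₁ : ∀ x ∈ Ioo 0 t₃, deriv g x < 0)
    (h₂ : ∀ x ∈ Ioo t₃ L, deriv g x < 0) : StrictAntiOn g (Ioc 0 L) := by
  rw [← Ioc_union_Icc_eq_Ioc ht₃ hL]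
  refine StrictAntiOn.union ?_ ?_ (isGreatest_Ioc ht₃) (isLeast_Icc hL)
  · exact strictAntiOn_of_deriv_neg (convex_Ioc 0 t₃) (hg.mono Ioc_subset_Ioi_self)
      (by rwa [interior_Ioc])
  · exact strictAntiOn_of_deriv_neg (convex_Icc t₃ L) (hg.mono fun x hx => ht₃.trans_le hx.1)
      (by rwa [interior_Icc])

theorem deriv_neg_of_forall_strictAntiOn_Ioc {g : ℝ → ℝ} {t₁ t₃ : ℝ} (ht₁ : 0 < t₁)
    (ht₃ : 0 < t₃) (hg : ContinuousOn g (Ioi 0)) (h₀ : ∀ x ∈ Ioo 0 t₃, deriv g x < 0)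
    (hstep : ∀ L, StrictAntiOn g (Ioc 0 L) → ∀ T, t₃ < T → T < L + t₁ → deriv g T < 0)
    {T : ℝ} (hT : t₃ < T) : deriv g T < 0 := by
  have hstrict : ∀ n : ℕ, StrictAntiOn g (Ioc 0 (t₃ + n * t₁)) := by
    intro n
    induction n with
    | zero => simpa using strictAntiOn_Ioc_of_deriv_neg ht₃ le_rfl hg h₀ (by simp)
    | succ n ih =>
      refine strictAntiOn_Ioc_of_deriv_neg ht₃ (le_add_of_nonneg_right (by positivity)) hg h₀
        fun x hx => hstep _ ih x hx.1 ?_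
      push_cast at hx
      linarith [hx.2]
  obtain ⟨n, hn⟩ := exists_nat_gt ((T - t₃) / t₁)
  rw [div_lt_iff₀ ht₁] at hn
  exact hstep _ (hstrict n) T hT (by linarith)

theorem HasDerivAt.nonpos_of_eventually_le_left {g : ℝ → ℝ} {g' T : ℝ} (hg : HasDerivAt g g' T)
    (h : ∀ᶠ y in 𝓝[<] T, g T ≤ g y) : g' ≤ 0 := by
  refine le_of_tendsto (hasDerivAt_iff_tendsto_slope_left_right.1 hg).1 ?_
  filter_upwards [h, self_mem_nhdsWithin] with y hy (hyT : y < T)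
  rw [slope_def_field]
  exact div_nonpos_of_nonneg_of_nonpos (sub_nonneg.2 hy) (sub_nonpos.2 hyT.le)

theorem integral_le_integral_of_nonpos_of_subset {φ : ℝ → ℝ} {a b c d : ℝ} (hca : c ≤ a)
    (hab : a ≤ b) (hbd : b ≤ d) (hφ : IntervalIntegrable φ volume c d)
    (h : ∀ x ∈ Ioo c d, φ x ≤ 0) : ∫ x in c..d, φ x ≤ ∫ x in a..b, φ x := by
  have h₀ : 0 ≤ᵐ[volume.restrict (Ioc c d)] fun x => -φ x := by
    rw [Measure.restrict_congr_set Ioo_ae_eq_Ioc.symm]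
    exact (ae_restrict_iff' measurableSet_Ioo).2 (ae_of_all _ fun x hx => neg_nonneg.2 (h x hx))
  simpa using intervalIntegral.integral_mono_interval hca hab hbd h₀ hφ.neg

theorem integral_indicator_mul_indicator_comp_sub {m f : ℝ → ℝ} {s t : ℝ} (hs : s ∈ Ioc 0 t) :
    ∫ x, (Ioc 0 t).indicator m x * (Ioi 0).indicator f (s - x) = ∫ x in 0..s, m x * f (s - x) := by
  have : (fun x => (Ioc 0 t).indicator m x * (Ioi 0).indicator f (s - x))
      = (Ioo 0 s).indicator fun x => m x * f (s - x) := by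
    funext x
    by_cases hx : x ∈ Ioo 0 s
    · rw [indicator_of_mem hx, indicator_of_mem (show x ∈ Ioc 0 t from ⟨hx.1, hx.2.le.trans hs.2⟩),
        indicator_of_mem (show s - x ∈ Ioi 0 from sub_pos.2 hx.2)]
    · rw [indicator_of_notMem hx]
      rcases le_or_gt x 0 with hx0 | hx0
      · rw [indicator_of_notMem fun h : x ∈ Ioc 0 t => h.1.not_ge hx0, zero_mul]
      · have : s - x ∉ Ioi 0 := fun h => hx ⟨hx0, sub_pos.1 h⟩
        rw [indicator_of_notMem this, mul_zero]
  rw [this, integral_indicator measurableSet_Ioo, intervalIntegral.integral_of_le hs.1.le,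
    integral_Ioc_eq_integral_Ioo]

theorem setIntegral_indicator_comp_sub {f : ℝ → ℝ} {t x : ℝ} (hf : IntegrableOn f (Ioi 0))
    (hx : x ∈ Icc 0 t) : ∫ s in Ioc 0 t, (Ioi 0).indicator f (s - x) = ∫ y in 0..(t - x), f y := by
  have hΦ : Integrable ((Ioi 0).indicator f) := (integrable_indicator_iff measurableSet_Ioi).2 hf
  rw [← intervalIntegral.integral_of_le (hx.1.trans hx.2), intervalIntegral.integral_comp_sub_right,
    zero_sub, ← intervalIntegral.integral_add_adjacent_intervals (b := 0) hΦ.intervalIntegrable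
      hΦ.intervalIntegrable]
  have h₁ : ∫ y in -x..0, (Ioi 0).indicator f y = 0 := by
    rw [intervalIntegral.integral_congr (g := fun _ => 0), intervalIntegral.integral_zero]
    intro y hy
    rw [uIcc_of_le (by linarith [hx.1])] at hy
    exact indicator_of_notMem (not_lt.2 hy.2) _
  have h₂ : ∫ y in 0..(t - x), (Ioi 0).indicator f y = ∫ y in 0..(t - x), f y := by
    rw [intervalIntegral.integral_of_le (sub_nonneg.2 hx.2),
      intervalIntegral.integral_of_le (sub_nonneg.2 hx.2)]
    exact setIntegral_congr_fun measurableSet_Ioc fun y hy => indicator_of_mem hy.1 _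
  rw [h₁, h₂, zero_add]

theorem integral_mul_primitive_sub {m f : ℝ → ℝ} {t : ℝ} (ht : 0 ≤ t)
    (hm : IntervalIntegrable m volume 0 t) (hf : IntegrableOn f (Ioi 0)) :
    ∫ x in 0..t, m x * ∫ y in 0..(t - x), f y = ∫ s in 0..t, ∫ x in 0..s, m x * f (s - x) := by
  -- Extended by zero, `m` and `f` turn the triangle `0 < x < s ≤ t` into a product domain.
  have hM : Integrable ((Ioc 0 t).indicator m) := (integrable_indicator_iff measurableSet_Ioc).2
    ((intervalIntegrable_iff_integrableOn_Ioc_of_le ht).1 hm)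
  have hΦ : Integrable ((Ioi 0).indicator f) := (integrable_indicator_iff measurableSet_Ioi).2 hf
  have hK : Integrable
      (Function.uncurry fun s x => (Ioc 0 t).indicator m x * (Ioi 0).indicator f (s - x))
      ((volume.restrict (Ioc 0 t)).prod volume) := by
    rw [Measure.restrict_prod_eq_prod_univ]
    exact (hM.convolution_integrand (ContinuousLinearMap.mul ℝ ℝ) hΦ).restrict
  have hs : ∀ x, ∫ s in Ioc 0 t, (Ioc 0 t).indicator m x * (Ioi 0).indicator f (s - x)
      = (Ioc 0 t).indicator (fun x => m x * ∫ y in 0..(t - x), f y) x := fun x => by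
    rw [integral_const_mul, indicator_mul_left]
    by_cases hx : x ∈ Ioc 0 t
    · rw [setIntegral_indicator_comp_sub hf ⟨hx.1.le, hx.2⟩]
    · rw [indicator_of_notMem hx, zero_mul, zero_mul]
  rw [intervalIntegral.integral_of_le ht, intervalIntegral.integral_of_le ht,
    ← integral_indicator measurableSet_Ioc, ← integral_congr_ae (ae_of_all _ hs),
    ← integral_integral_swap hK]
  exact setIntegral_congr_fun measurableSet_Ioc fun s hs =>
    integral_indicator_mul_indicator_comp_sub hs

structure IsPosContDensity (f : ℝ → ℝ) : Prop where
  pos : ∀ x ∈ Ici (0 : ℝ), 0 < f x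
  continuousOn : ContinuousOn f (Ici 0)
  integrableOn : IntegrableOn f (Ici 0)
  integral_eq_one : ∫ x in Ici (0 : ℝ), f x = 1

/-- With `c = hazardRate f S` this is the kernel `ψ_S = (r - r S) F̄` of the comparison argument. -/
noncomputable def hazardExcess (f : ℝ → ℝ) (c x : ℝ) : ℝ := f x - c * survival f x

namespace IsPosContDensity

variable {f : ℝ → ℝ}

theorem intervalIntegrable (hf : IsPosContDensity f) {a b : ℝ} (ha : 0 ≤ a) (hb : 0 ≤ b) :
    IntervalIntegrable f volume a b :=
  (hf.integrableOn.mono_set fun _ hx => (le_min ha hb).trans hx.1).intervalIntegrable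

theorem integrableOn_Ioi (hf : IsPosContDensity f) {t : ℝ} (ht : 0 ≤ t) :
    IntegrableOn f (Ioi t) :=
  hf.integrableOn.mono_set (Ioi_subset_Ici ht)

theorem survival_sub_survival (hf : IsPosContDensity f) {s t : ℝ} (hs : 0 ≤ s) (hst : s ≤ t) :
    survival f s - survival f t = ∫ x in s..t, f x :=
  intervalIntegral.integral_Ioi_sub_Ioi (hf.integrableOn_Ioi hs) hst

theorem survival_eq_one_sub (hf : IsPosContDensity f) {t : ℝ} (ht : 0 ≤ t) :
    survival f t = 1 - ∫ x in 0..t, f x := by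
  have h₀ : survival f 0 = 1 := by
    rw [survival, ← integral_Ici_eq_integral_Ioi, hf.integral_eq_one]
  linarith [hf.survival_sub_survival le_rfl ht]

theorem survival_pos (hf : IsPosContDensity f) {t : ℝ} (ht : 0 ≤ t) : 0 < survival f t := by
  have h₁ : 0 < ∫ x in t..t + 1, f x :=
    intervalIntegral.intervalIntegral_pos_of_pos_on (hf.intervalIntegrable ht (by linarith))
      (fun x hx => hf.pos x (ht.trans hx.1.le)) (by linarith)
  have h₂ : 0 ≤ survival f (t + 1) := setIntegral_nonneg measurableSet_Ioi fun x hx =>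
    (hf.pos x (by rw [mem_Ioi] at hx; rw [mem_Ici]; linarith)).le
  linarith [hf.survival_sub_survival ht (by linarith : t ≤ t + 1)]

theorem survival_antitoneOn (hf : IsPosContDensity f) : AntitoneOn (survival f) (Ici 0) := by
  intro s hs t _ hst
  have : 0 ≤ ∫ x in s..t, f x :=
    intervalIntegral.integral_nonneg hst fun x hx => (hf.pos x (le_trans hs hx.1)).le
  linarith [hf.survival_sub_survival hs hst]

theorem continuousOn_survival (hf : IsPosContDensity f) : ContinuousOn (survival f) (Ici 0) :=
  (hf.integrableOn_Ioi le_rfl).continuousOn_Ici_primitive_Ioi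

theorem hazardRate_mul_survival (hf : IsPosContDensity f) {t : ℝ} (ht : 0 ≤ t) :
    hazardRate f t * survival f t = f t :=
  div_mul_cancel₀ _ (hf.survival_pos ht).ne'

theorem hazardRate_nonneg (hf : IsPosContDensity f) {t : ℝ} (ht : 0 ≤ t) : 0 ≤ hazardRate f t :=
  div_nonneg (hf.pos t ht).le (hf.survival_pos ht).le

theorem hazardExcess_eq (hf : IsPosContDensity f) (c : ℝ) {x : ℝ} (hx : 0 ≤ x) :
    hazardExcess f c x = (hazardRate f x - c) * survival f x := by
  rw [hazardExcess, sub_mul, hf.hazardRate_mul_survival hx]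

theorem hazardExcess_hazardRate_self (hf : IsPosContDensity f) {x : ℝ} (hx : 0 ≤ x) :
    hazardExcess f (hazardRate f x) x = 0 := by
  rw [hf.hazardExcess_eq _ hx, sub_self, zero_mul]

theorem hazardExcess_nonneg (hf : IsPosContDensity f) {c x : ℝ} (hx : 0 ≤ x)
    (hc : c ≤ hazardRate f x) : 0 ≤ hazardExcess f c x := by
  rw [hf.hazardExcess_eq c hx]
  exact mul_nonneg (sub_nonneg.2 hc) (hf.survival_pos hx).le

theorem hazardExcess_pos (hf : IsPosContDensity f) {c x : ℝ} (hx : 0 ≤ x)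
    (hc : c < hazardRate f x) : 0 < hazardExcess f c x := by
  rw [hf.hazardExcess_eq c hx]
  exact mul_pos (sub_pos.2 hc) (hf.survival_pos hx)

theorem hazardExcess_le_self (hf : IsPosContDensity f) {c x : ℝ} (hc : 0 ≤ c) (hx : 0 ≤ x) :
    hazardExcess f c x ≤ f x := by
  have := mul_nonneg hc (hf.survival_pos hx).le
  rw [hazardExcess]
  linarith

theorem hazardExcess_le_of_le (hf : IsPosContDensity f) {a c x : ℝ} (ha : 0 ≤ a) (hax : a ≤ x)
    (hc : c ≤ hazardRate f x) (hxa : hazardRate f x ≤ hazardRate f a) :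
    hazardExcess f c x ≤ hazardExcess f c a := by
  rw [hf.hazardExcess_eq c (ha.trans hax), hf.hazardExcess_eq c ha]
  exact mul_le_mul (by linarith) (hf.survival_antitoneOn ha (ha.trans hax) hax)
    (hf.survival_pos (ha.trans hax)).le (by linarith)

theorem continuousOn_hazardExcess (hf : IsPosContDensity f) (c : ℝ) :
    ContinuousOn (hazardExcess f c) (Ici 0) :=
  hf.continuousOn.sub (continuousOn_const.mul hf.continuousOn_survival)

end IsPosContDensity

/-- Clamping at `t₃` makes this vanish for `s ≤ t₃` and keeps it continuous although `m` is only
continuous on `(0, ∞)`. -/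
noncomputable def tailIncrement (m : ℝ → ℝ) (t₃ h s : ℝ) : ℝ :=
  max (m (max s t₃) - m (max (s - h) t₃)) 0

section TailIncrement

variable {m : ℝ → ℝ} {t₃ h : ℝ}

theorem tailIncrement_nonneg (s : ℝ) : 0 ≤ tailIncrement m t₃ h s := le_max_right _ _

theorem tailIncrement_of_le (hh : 0 ≤ h) {s : ℝ} (hs : s ≤ t₃) : tailIncrement m t₃ h s = 0 := by
  simp [tailIncrement, max_eq_right hs, max_eq_right (by linarith : s - h ≤ t₃)]

theorem tailIncrement_of_ge {s : ℝ} (hs : t₃ ≤ s) :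
    tailIncrement m t₃ h s = max (m s - m (max (s - h) t₃)) 0 := by
  rw [tailIncrement, max_eq_left hs]

theorem continuous_tailIncrement (hmc : ContinuousOn m (Ioi 0)) (ht₃ : 0 < t₃) :
    Continuous (tailIncrement m t₃ h) := by
  have hc : ∀ g : ℝ → ℝ, Continuous g → Continuous fun s => m (max (g s) t₃) := fun g hg =>
    hmc.comp_continuous (hg.max continuous_const) fun s => ht₃.trans_le (le_max_right _ _)
  exact ((hc id continuous_id).sub (hc (· - h) (continuous_id.sub continuous_const))).max
    continuous_const

theorem sub_le_tailIncrement (hm₀ : AntitoneOn m (Ioc 0 t₃)) (hh : 0 ≤ h) {b x : ℝ} (hb : t₃ ≤ b)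
    (hx : 0 < x) (hxa : x < max (b - h) t₃) :
    m (b - x) - m (max (b - h) t₃ - x) ≤ tailIncrement m t₃ h (b - x) := by
  set a := max (b - h) t₃
  have hab : a ≤ b := max_le (by linarith) hb
  rcases lt_or_ge (b - x) t₃ with hbx | hbx
  · have : m (b - x) ≤ m (a - x) :=
      hm₀ ⟨by linarith, by linarith⟩ ⟨by linarith, hbx.le⟩ (by linarith)
    linarith [tailIncrement_nonneg (m := m) (t₃ := t₃) (h := h) (b - x)]
  rw [tailIncrement_of_ge hbx]
  refine le_max_of_le_left ?_
  rcases le_or_gt t₃ (b - x - h) with hbxh | hbxh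
  · rw [show a = b - h from max_eq_left (by linarith), max_eq_left hbxh, sub_right_comm]
  · have hat : a ≤ t₃ + x := max_le (by linarith) (by linarith)
    have : m t₃ ≤ m (a - x) := hm₀ ⟨by linarith, by linarith⟩ ⟨by linarith, le_rfl⟩ (by linarith)
    rw [max_eq_right hbxh.le]
    linarith

end TailIncrement

structure IsRenewalDensity (f m : ℝ → ℝ) : Prop where
  locallyIntegrableOn : LocallyIntegrableOn m (Ici 0)
  eq_add_integral : ∀ t ∈ Ici (0 : ℝ), m t = f t + ∫ x in (0 : ℝ)..t, m x * f (t - x)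

namespace IsRenewalDensity

variable {f m : ℝ → ℝ}

theorem intervalIntegrable (hm : IsRenewalDensity f m) {a b : ℝ} (ha : 0 ≤ a) (hb : 0 ≤ b) :
    IntervalIntegrable m volume a b :=
  (hm.locallyIntegrableOn.integrableOn_compact_subset
    (fun _ hx => (le_min ha hb).trans hx.1) isCompact_uIcc).intervalIntegrable

theorem intervalIntegrable_comp_sub (hm : IsRenewalDensity f m) {t a b : ℝ} (ha : a ≤ t)
    (hb : b ≤ t) : IntervalIntegrable (fun x => m (t - x)) volume a b := by
  simpa using (hm.intervalIntegrable (sub_nonneg.2 ha) (sub_nonneg.2 hb)).comp_sub_left t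

theorem intervalIntegrable_mul_comp_sub (hm : IsRenewalDensity f m) {g : ℝ → ℝ}
    (hg : ContinuousOn g (Ici 0)) {t a b : ℝ} (ha : 0 ≤ a) (hb : 0 ≤ b) (hat : a ≤ t)
    (hbt : b ≤ t) : IntervalIntegrable (fun x => g x * m (t - x)) volume a b :=
  (hm.intervalIntegrable_comp_sub hat hbt).continuousOn_mul
    (hg.mono fun _ hx => (le_min ha hb).trans hx.1)

theorem intervalIntegrable_mul_sub_comp_sub (hm : IsRenewalDensity f m) {g : ℝ → ℝ}
    (hg : ContinuousOn g (Ici 0)) {S s a b : ℝ} (ha : 0 ≤ a) (hb : 0 ≤ b) (has : a ≤ s)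
    (hbs : b ≤ s) (hsS : s ≤ S) :
    IntervalIntegrable (fun x => g x * (m (S - x) - m (s - x))) volume a b := by
  simpa only [mul_sub] using (hm.intervalIntegrable_mul_comp_sub hg ha hb (has.trans hsS)
    (hbs.trans hsS)).sub (hm.intervalIntegrable_mul_comp_sub hg ha hb has hbs)

theorem integral_mul_survival_sub (hm : IsRenewalDensity f m) (hf : IsPosContDensity f) {t : ℝ}
    (ht : 0 ≤ t) : ∫ x in 0..t, m x * survival f (t - x) = ∫ x in 0..t, f x := by
  have hm₀ := hm.intervalIntegrable le_rfl ht
  have hmF : IntervalIntegrable (fun x => m x * survival f (t - x)) volume 0 t :=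
    hm₀.mul_continuousOn (hf.continuousOn_survival.comp (continuousOn_const.sub continuousOn_id)
      fun x hx => by rw [uIcc_of_le ht] at hx; exact sub_nonneg.2 hx.2)
  have hconv := integral_mul_primitive_sub ht hm₀ (hf.integrableOn_Ioi le_rfl)
  have hlhs : ∫ x in 0..t, m x * ∫ y in 0..(t - x), f y
      = (∫ x in 0..t, m x) - ∫ x in 0..t, m x * survival f (t - x) := by
    rw [← intervalIntegral.integral_sub hm₀ hmF]
    refine intervalIntegral.integral_congr fun x hx => ?_
    rw [uIcc_of_le ht] at hx
    simp only [hf.survival_eq_one_sub (sub_nonneg.2 hx.2)]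
    ring
  have hrhs : ∫ s in 0..t, ∫ x in 0..s, m x * f (s - x)
      = (∫ x in 0..t, m x) - ∫ x in 0..t, f x := by
    rw [← intervalIntegral.integral_sub hm₀ (hf.intervalIntegrable le_rfl ht)]
    refine intervalIntegral.integral_congr fun s hs => ?_
    rw [uIcc_of_le ht] at hs
    simp only [hm.eq_add_integral s hs.1]
    ring
  linarith

theorem eq_add_integral_hazardExcess_mul (hm : IsRenewalDensity f m) (hf : IsPosContDensity f)
    (c : ℝ) {t : ℝ} (ht : 0 ≤ t) :
    m t = c + hazardExcess f c t + ∫ x in 0..t, hazardExcess f c x * m (t - x) := by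
  have hflip : ∀ g : ℝ → ℝ, ∫ x in 0..t, g x * m (t - x) = ∫ x in 0..t, m x * g (t - x) :=
    fun g => by simpa [mul_comm] using
      intervalIntegral.integral_comp_sub_left (a := 0) (b := t) (fun x => m x * g (t - x)) t
  have hsplit : ∫ x in 0..t, hazardExcess f c x * m (t - x)
      = (∫ x in 0..t, f x * m (t - x)) - c * ∫ x in 0..t, survival f x * m (t - x) := by
    rw [← intervalIntegral.integral_const_mul, ← intervalIntegral.integral_sub
      (hm.intervalIntegrable_mul_comp_sub hf.continuousOn le_rfl ht ht le_rfl)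
      ((hm.intervalIntegrable_mul_comp_sub hf.continuousOn_survival le_rfl ht ht
        le_rfl).const_mul c)]
    simp only [hazardExcess]
    congr 1
    funext x
    ring
  rw [hsplit, hflip f, hflip (survival f), hm.integral_mul_survival_sub hf ht,
    hazardExcess, hf.survival_eq_one_sub ht]
  linear_combination hm.eq_add_integral t ht

theorem sub_le_integral_hazardExcess_mul (hm : IsRenewalDensity f m) (hf : IsPosContDensity f)
    {a S : ℝ} (ha : 0 ≤ a) (haS : a ≤ S) (hr : AntitoneOn (hazardRate f) (Icc a S))
    (hsmall : ∫ x in 0..(S - a), |m x| ≤ 1) :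
    m S - m a ≤ ∫ x in 0..a, hazardExcess f (hazardRate f S) x * (m (S - x) - m (a - x)) := by
  set ψ := hazardExcess f (hazardRate f S)
  have hS : 0 ≤ S := ha.trans haS
  have hψc : ContinuousOn ψ (Ici 0) := hf.continuousOn_hazardExcess _
  have hψ : ∀ x ∈ Icc a S, 0 ≤ ψ x ∧ ψ x ≤ ψ a := fun x hx => by
    have hSx : hazardRate f S ≤ hazardRate f x := hr hx (right_mem_Icc.2 haS) hx.2
    exact ⟨hf.hazardExcess_nonneg (ha.trans hx.1) hSx,
      hf.hazardExcess_le_of_le ha hx.1 hSx (hr (left_mem_Icc.2 haS) hx hx.1)⟩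
  -- The tail over `[a, S]` is at most `ψ a`, which cancels `ψ a` in the identity at `a`.
  have htail : ∫ x in a..S, ψ x * m (S - x) ≤ ψ a := by
    calc ∫ x in a..S, ψ x * m (S - x) ≤ ∫ x in a..S, ψ a * |m (S - x)| := by
          refine intervalIntegral.integral_mono_on haS
            (hm.intervalIntegrable_mul_comp_sub hψc ha hS haS le_rfl)
            ((hm.intervalIntegrable_comp_sub haS le_rfl).abs.const_mul _) fun x hx => ?_
          obtain ⟨h₀, hle⟩ := hψ x hx
          exact (mul_le_mul_of_nonneg_left (le_abs_self _) h₀).trans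
            (mul_le_mul_of_nonneg_right hle (abs_nonneg _))
      _ = ψ a * ∫ x in 0..(S - a), |m x| := by
          rw [intervalIntegral.integral_const_mul,
            intervalIntegral.integral_comp_sub_left (fun x => |m x|), sub_self]
      _ ≤ ψ a := mul_le_of_le_one_right (hψ a (left_mem_Icc.2 haS)).1 hsmall
  have hsplit := intervalIntegral.integral_add_adjacent_intervals
    (hm.intervalIntegrable_mul_comp_sub hψc le_rfl ha hS haS)
    (hm.intervalIntegrable_mul_comp_sub hψc ha hS haS le_rfl)
  have hdiff : ∫ x in 0..a, ψ x * (m (S - x) - m (a - x))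
      = (∫ x in 0..a, ψ x * m (S - x)) - ∫ x in 0..a, ψ x * m (a - x) := by
    rw [← intervalIntegral.integral_sub (hm.intervalIntegrable_mul_comp_sub hψc le_rfl ha hS haS)
      (hm.intervalIntegrable_mul_comp_sub hψc le_rfl ha ha le_rfl)]
    simp only [mul_sub]
  have eS := hm.eq_add_integral_hazardExcess_mul hf (hazardRate f S) hS
  have ea := hm.eq_add_integral_hazardExcess_mul hf (hazardRate f S) ha
  rw [hdiff]
  linarith [hf.hazardExcess_hazardRate_self hS]

theorem exists_integral_abs_le_one (hm : IsRenewalDensity f m) :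
    ∃ δ > 0, ∀ h ∈ Icc 0 δ, ∫ x in 0..h, |m x| ≤ 1 := by
  have hc : ContinuousWithinAt (fun h => ∫ x in 0..h, |m x|) (Ici 0) 0 := by
    have hmem : uIcc (0 : ℝ) 1 ∈ 𝓝[≥] 0 := by
      rw [uIcc_of_le zero_le_one]; exact Icc_mem_nhdsGE zero_lt_one
    exact (intervalIntegral.continuousOn_primitive_interval'
      (hm.intervalIntegrable le_rfl zero_le_one).abs left_mem_uIcc 0
        left_mem_uIcc).mono_of_mem_nhdsWithin hmem
  have hev : ∀ᶠ h in 𝓝[≥] 0, ∫ x in 0..h, |m x| < 1 :=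
    hc.tendsto.eventually (gt_mem_nhds (by simp))
  obtain ⟨δ, hδ, hsub⟩ := mem_nhdsGE_iff_exists_Icc_subset.1 hev
  exact ⟨δ, hδ, fun h hh => (hsub hh).le⟩

theorem hasDerivAt_integral (hm : IsRenewalDensity f m) (hmc : ContinuousOn m (Ioi 0)) {y : ℝ}
    (hy : 0 < y) : HasDerivAt (fun y => ∫ x in 0..y, m x) (m y) y :=
  intervalIntegral.integral_hasDerivAt_right (hm.intervalIntegrable le_rfl hy.le)
    (hmc.stronglyMeasurableAtFilter isOpen_Ioi y hy) (hmc.continuousAt (Ioi_mem_nhds hy))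

theorem hasDerivAt_integral_comp_sub (hm : IsRenewalDensity f m) (hmc : ContinuousOn m (Ioi 0))
    {α β T : ℝ} (hαβ : α ≤ β) (hβT : β < T) :
    HasDerivAt (fun s => ∫ x in α..β, m (s - x)) (m (T - α) - m (T - β)) T := by
  have hP := ((hm.hasDerivAt_integral hmc (by linarith : 0 < T - α)).comp_sub_const T α).sub
    ((hm.hasDerivAt_integral hmc (by linarith : 0 < T - β)).comp_sub_const T β)
  refine hP.congr_of_eventuallyEq ?_
  filter_upwards [Ioi_mem_nhds hβT] with s hs
  rw [Pi.sub_apply, intervalIntegral.integral_comp_sub_left,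
    intervalIntegral.integral_interval_sub_left
    (hm.intervalIntegrable le_rfl (by linarith [mem_Ioi.1 hs]))
    (hm.intervalIntegrable le_rfl (by linarith [mem_Ioi.1 hs]))]

variable {t₃ : ℝ}

theorem sub_le_mul_integral_tailIncrement (hm : IsRenewalDensity f m) (hf : IsPosContDensity f)
    (hmc : ContinuousOn m (Ioi 0)) (ht₃ : 0 < t₃) (hm₀ : AntitoneOn m (Ioc 0 t₃))
    (hr : ∀ t, t₃ < t → ∀ x ∈ Ioo 0 t, hazardRate f t ≤ hazardRate f x) {h : ℝ} (hh : 0 ≤ h)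
    (hsmall : ∀ g ∈ Icc 0 h, ∫ x in 0..g, |m x| ≤ 1) {B C : ℝ} (hC : ∀ x ∈ Icc 0 B, f x ≤ C)
    {b : ℝ} (hb : t₃ < b) (hbB : b ≤ B) :
    m b - m (max (b - h) t₃) ≤ C * ∫ y in 0..b, tailIncrement m t₃ h y := by
  set a := max (b - h) t₃
  set ψ := hazardExcess f (hazardRate f b)
  have hta : t₃ ≤ a := le_max_right _ _
  have hab : a ≤ b := max_le (by linarith) hb.le
  have ha : 0 ≤ a := ht₃.le.trans hta
  have hC₀ : 0 ≤ C := (hf.pos 0 self_mem_Ici).le.trans (hC 0 ⟨le_rfl, by linarith⟩)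
  have hw := continuous_tailIncrement (h := h) hmc ht₃
  have hwb : ∀ u v, IntervalIntegrable (fun x => C * tailIncrement m t₃ h (b - x)) volume u v :=
    (by fun_prop : Continuous fun x => C * tailIncrement m t₃ h (b - x)).intervalIntegrable
  have hcmp := hm.sub_le_integral_hazardExcess_mul hf ha hab
    ((antitoneOn_Ici_of_forall_Ioo_le ht₃ hr).mono fun x hx => hta.trans hx.1)
    (hsmall _ ⟨by linarith, by linarith [le_max_left (b - h) t₃]⟩)
  calc m b - m a ≤ ∫ x in 0..a, ψ x * (m (b - x) - m (a - x)) := hcmp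
    _ ≤ ∫ x in 0..a, C * tailIncrement m t₃ h (b - x) := by
        refine intervalIntegral.integral_mono_on_of_le_Ioo ha
          (hm.intervalIntegrable_mul_sub_comp_sub (hf.continuousOn_hazardExcess _) le_rfl ha ha
            le_rfl hab)
          (hwb 0 a) fun x hx => ?_
        have hψ₀ : 0 ≤ ψ x := hf.hazardExcess_nonneg hx.1.le (hr b hb x ⟨hx.1, hx.2.trans_le hab⟩)
        have hψC : ψ x ≤ C := (hf.hazardExcess_le_self (hf.hazardRate_nonneg (by linarith))
          hx.1.le).trans (hC x ⟨hx.1.le, by linarith [hx.2]⟩)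
        exact (mul_le_mul_of_nonneg_left (sub_le_tailIncrement hm₀ hh hb.le hx.1 hx.2) hψ₀).trans
          (mul_le_mul_of_nonneg_right hψC (tailIncrement_nonneg _))
    _ ≤ ∫ x in 0..b, C * tailIncrement m t₃ h (b - x) :=
        intervalIntegral.integral_mono_interval le_rfl ha hab
          (ae_of_all _ fun x => mul_nonneg hC₀ (tailIncrement_nonneg _)) (hwb 0 b)
    _ = C * ∫ y in 0..b, tailIncrement m t₃ h y := by
        rw [intervalIntegral.integral_const_mul,
          intervalIntegral.integral_comp_sub_left (fun y => tailIncrement m t₃ h y), sub_self,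
          sub_zero]

theorem apply_le_apply_max_sub (hm : IsRenewalDensity f m) (hf : IsPosContDensity f)
    (hmc : ContinuousOn m (Ioi 0)) (ht₃ : 0 < t₃) (hm₀ : AntitoneOn m (Ioc 0 t₃))
    (hr : ∀ t, t₃ < t → ∀ x ∈ Ioo 0 t, hazardRate f t ≤ hazardRate f x) {h : ℝ} (hh : 0 ≤ h)
    (hsmall : ∀ g ∈ Icc 0 h, ∫ x in 0..g, |m x| ≤ 1) {b : ℝ} (hb : t₃ ≤ b) :
    m b ≤ m (max (b - h) t₃) := by
  obtain ⟨C, hC⟩ := isCompact_Icc.exists_bound_of_continuousOn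
    (hf.continuousOn.mono (Icc_subset_Ici_self : Icc 0 b ⊆ Ici 0))
  have hC' : ∀ x ∈ Icc 0 b, f x ≤ C := fun x hx => (le_abs_self _).trans (hC x hx)
  have hC₀ : 0 ≤ C := (norm_nonneg _).trans (hC 0 ⟨le_rfl, by linarith⟩)
  have hzero := eq_zero_of_le_mul_integral (continuous_tailIncrement (h := h) hmc ht₃).continuousOn
    (fun s _ => tailIncrement_nonneg s) fun s hs => by
      have hI : 0 ≤ C * ∫ y in 0..s, tailIncrement m t₃ h y :=
        mul_nonneg hC₀ (intervalIntegral.integral_nonneg hs.1 fun y _ => tailIncrement_nonneg y)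
      rcases le_or_gt s t₃ with hs₃ | hs₃
      · rw [tailIncrement_of_le hh hs₃]
        exact hI
      · rw [tailIncrement_of_ge hs₃.le]
        exact max_le
          (hm.sub_le_mul_integral_tailIncrement hf hmc ht₃ hm₀ hr hh hsmall hC' hs₃ hs.2) hI
  have := hzero b ⟨by linarith, le_rfl⟩
  rw [tailIncrement_of_ge hb] at this
  linarith [le_max_left (m b - m (max (b - h) t₃)) 0]

theorem antitoneOn_Ioi (hm : IsRenewalDensity f m) (hf : IsPosContDensity f)
    (hmc : ContinuousOn m (Ioi 0)) (ht₃ : 0 < t₃) (hm₀ : AntitoneOn m (Ioc 0 t₃))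
    (hr : ∀ t, t₃ < t → ∀ x ∈ Ioo 0 t, hazardRate f t ≤ hazardRate f x) :
    AntitoneOn m (Ioi 0) := by
  obtain ⟨δ, hδ, hsmall⟩ := hm.exists_integral_abs_le_one
  have htail : AntitoneOn m (Ici t₃) := antitoneOn_Ici_of_le_of_le_add hδ fun a b ha hab hbδ => by
    have := hm.apply_le_apply_max_sub hf hmc ht₃ hm₀ hr (sub_nonneg.2 hab)
      (fun g hg => hsmall g ⟨hg.1, by linarith [hg.2]⟩) (ha.trans hab)
    rwa [sub_sub_cancel, max_eq_left ha] at this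
  rw [← Ioc_union_Ici_eq_Ioi ht₃]
  exact hm₀.union_right htail (isGreatest_Ioc ht₃) isLeast_Ici

theorem sub_le_mul_sub_integral_comp_sub (hm : IsRenewalDensity f m) (hf : IsPosContDensity f)
    (hanti : AntitoneOn m (Ioi 0)) (ht₃ : 0 < t₃)
    (hr : ∀ t, t₃ < t → ∀ x ∈ Ioo 0 t, hazardRate f t ≤ hazardRate f x) {T y α β c : ℝ}
    (hT : t₃ < T) (ht₃y : t₃ ≤ y) (hyT : y ≤ T) (hα : 0 ≤ α) (hαβ : α ≤ β) (hβy : β ≤ y)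
    (hc : ∀ x ∈ Icc α β, c ≤ hazardExcess f (hazardRate f T) x)
    (hsmall : ∫ x in 0..(T - y), |m x| ≤ 1) :
    m T - m y ≤ c * ((∫ x in α..β, m (T - x)) - ∫ x in α..β, m (y - x)) := by
  set ψ := hazardExcess f (hazardRate f T)
  have hψc := hf.continuousOn_hazardExcess (hazardRate f T)
  have hD : ∀ x ∈ Ioo 0 y, m (T - x) - m (y - x) ≤ 0 := fun x hx =>
    sub_nonpos.2 (hanti (sub_pos.2 hx.2) (by simp; linarith [hx.2]) (by linarith))
  have hIT := hm.intervalIntegrable_comp_sub (t := T) (a := α) (b := β) (by linarith) (by linarith)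
  have hIy := hm.intervalIntegrable_comp_sub (t := y) (a := α) (b := β) (by linarith) hβy
  calc m T - m y ≤ ∫ x in 0..y, ψ x * (m (T - x) - m (y - x)) :=
        hm.sub_le_integral_hazardExcess_mul hf (by linarith) hyT
          ((antitoneOn_Ici_of_forall_Ioo_le ht₃ hr).mono fun x hx => ht₃y.trans hx.1) hsmall
    _ ≤ ∫ x in α..β, ψ x * (m (T - x) - m (y - x)) :=
        integral_le_integral_of_nonpos_of_subset hα hαβ hβy
          (hm.intervalIntegrable_mul_sub_comp_sub hψc le_rfl (by linarith) (by linarith) le_rfl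
            hyT) fun x hx => mul_nonpos_of_nonneg_of_nonpos
            (hf.hazardExcess_nonneg hx.1.le (hr T hT x ⟨hx.1, hx.2.trans_le hyT⟩)) (hD x hx)
    _ ≤ ∫ x in α..β, c * (m (T - x) - m (y - x)) :=
        intervalIntegral.integral_mono_on_of_le_Ioo hαβ
          (hm.intervalIntegrable_mul_sub_comp_sub hψc hα (by linarith) (by linarith) hβy hyT)
          ((hIT.sub hIy).const_mul _) fun x hx => mul_le_mul_of_nonpos_right
            (hc x (Ioo_subset_Icc_self hx)) (hD x ⟨by linarith [hx.1], by linarith [hx.2]⟩)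
    _ = c * ((∫ x in α..β, m (T - x)) - ∫ x in α..β, m (y - x)) := by
        rw [intervalIntegral.integral_const_mul, intervalIntegral.integral_sub hIT hIy]

theorem deriv_neg_of_lt (hm : IsRenewalDensity f m) (hf : IsPosContDensity f)
    (hmc : ContinuousOn m (Ioi 0)) (hanti : AntitoneOn m (Ioi 0)) (ht₃ : 0 < t₃)
    (hr : ∀ t, t₃ < t → ∀ x ∈ Ioo 0 t, hazardRate f t ≤ hazardRate f x) {T α β : ℝ}
    (hT : t₃ < T) (hmT : DifferentiableAt ℝ m T) (hα : 0 < α) (hαβ : α < β) (hβT : β < T)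
    (hrαβ : ∀ x ∈ Icc α β, hazardRate f T < hazardRate f x) (hmαβ : m (T - α) < m (T - β)) :
    deriv m T < 0 := by
  obtain ⟨x₀, hx₀, hmin⟩ := isCompact_Icc.exists_isMinOn (nonempty_Icc.2 hαβ.le)
    ((hf.continuousOn_hazardExcess (hazardRate f T)).mono fun x hx => hα.le.trans hx.1)
  have hc : 0 < hazardExcess f (hazardRate f T) x₀ :=
    hf.hazardExcess_pos (hα.le.trans hx₀.1) (hrαβ x₀ hx₀)
  obtain ⟨δ, hδ, hsmall⟩ := hm.exists_integral_abs_le_one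
  have hslope := (hmT.hasDerivAt.sub ((hm.hasDerivAt_integral_comp_sub hmc hαβ.le hβT).const_mul
    (hazardExcess f (hazardRate f T) x₀))).nonpos_of_eventually_le_left <| by
      filter_upwards [Ioo_mem_nhdsLT (max_lt (sub_lt_self T hδ) (max_lt hT hβT))] with y hy
      simp only [mem_Ioo, max_lt_iff] at hy
      simp only [Pi.sub_apply]
      linarith [hm.sub_le_mul_sub_integral_comp_sub hf hanti ht₃ hr hT hy.1.2.1.le hy.2.le hα.le
        hαβ.le hy.1.2.2.le (fun x hx => hmin hx) (hsmall _ ⟨by linarith, by linarith⟩)]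
  nlinarith

theorem deriv_neg_of_strictAntiOn (hm : IsRenewalDensity f m) (hf : IsPosContDensity f)
    (hmc : ContinuousOn m (Ioi 0)) (hanti : AntitoneOn m (Ioi 0)) {t₁ : ℝ} (ht₁ : 0 < t₁)
    (ht₁₃ : t₁ < t₃) (hr : ∀ t, t₃ < t → ∀ x ∈ Ioo 0 t, hazardRate f t ≤ hazardRate f x)
    (hr₁ : ∀ t, t₃ < t → ∀ x ∈ Ioo 0 t, x < t₁ → hazardRate f t < hazardRate f x) {L : ℝ}
    (hL : StrictAntiOn m (Ioc 0 L)) {T : ℝ} (hT : t₃ < T) (hTL : T < L + t₁)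
    (hmT : DifferentiableAt ℝ m T) : deriv m T < 0 := by
  set γ := max (T - L) 0
  have hγ : γ < t₁ := max_lt (by linarith) ht₁
  set α := (γ + t₁) / 2 with hα_def
  set β := (α + t₁) / 2 with hβ_def
  have hα : 0 < α := by linarith [le_max_right (T - L) 0]
  have hαβ : α < β := by linarith
  have hβt₁ : β < t₁ := by linarith
  have hTα : T - α < L := by linarith [le_max_left (T - L) 0]
  exact hm.deriv_neg_of_lt hf hmc hanti (ht₁.trans ht₁₃) hr hT hmT hα hαβ (by linarith)
    (fun x hx => hr₁ T hT x ⟨hα.trans_le hx.1, by linarith [hx.2]⟩ (by linarith [hx.2]))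
    (hL ⟨by linarith, by linarith⟩ ⟨by linarith, hTα.le⟩ (by linarith))

end IsRenewalDensity

theorem renewal_density_strict_decrease_on_tail_general
    (t₁ t₃ : ℝ) (ht₁ : 0 < t₁) (ht₁₃ : t₁ < t₃)
    (f m : ℝ → ℝ)
    (hf_pos : ∀ x ∈ Set.Ici (0 : ℝ), 0 < f x)
    (hf_cont : ContinuousOn f (Set.Ici 0))
    (hf_int : IntegrableOn f (Set.Ici 0))
    (hf_one : (∫ x in Set.Ici (0 : ℝ), f x) = 1)
    (hr_ge : ∀ t : ℝ, t₃ < t → ∀ x : ℝ, 0 < x → x < t →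
      hazardRate f t ≤ hazardRate f (t - x) ∧
        (t - x < t₁ → hazardRate f t < hazardRate f (t - x)))
    (hm_loc : LocallyIntegrableOn m (Set.Ici 0))
    (hm_eq : ∀ t ∈ Set.Ici (0 : ℝ), m t = f t + ∫ x in (0 : ℝ)..t, m x * f (t - x))
    (hm_diff : ∀ x : ℝ, 0 < x → DifferentiableAt ℝ m x)
    (hm'_neg : ∀ x ∈ Set.Ioo 0 t₃, deriv m x < 0) :
    (∀ t : ℝ, t₃ < t → deriv m t < 0) ∧ StrictAntiOn m (Set.Ici t₃) := by
  have hf : IsPosContDensity f := ⟨hf_pos, hf_cont, hf_int, hf_one⟩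
  have hm : IsRenewalDensity f m := ⟨hm_loc, hm_eq⟩
  have ht₃ : 0 < t₃ := ht₁.trans ht₁₃
  have hmc : ContinuousOn m (Ioi 0) := fun x hx => (hm_diff x hx).continuousAt.continuousWithinAt
  have hr : ∀ t, t₃ < t → ∀ x ∈ Ioo 0 t, hazardRate f t ≤ hazardRate f x := fun t ht x hx => by
    simpa using (hr_ge t ht (t - x) (by linarith [hx.2]) (by linarith [hx.1])).1
  have hr₁ : ∀ t, t₃ < t → ∀ x ∈ Ioo 0 t, x < t₁ → hazardRate f t < hazardRate f x :=
    fun t ht x hx hx₁ => by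
      simpa using (hr_ge t ht (t - x) (by linarith [hx.2]) (by linarith [hx.1])).2 (by linarith)
  have hanti := hm.antitoneOn_Ioi hf hmc ht₃
    (strictAntiOn_Ioc_of_deriv_neg ht₃ le_rfl hmc hm'_neg (by simp)).antitoneOn hr
  have hneg : ∀ t, t₃ < t → deriv m t < 0 := fun t =>
    deriv_neg_of_forall_strictAntiOn_Ioc ht₁ ht₃ hmc hm'_neg fun L hL T hT hTL =>
      hm.deriv_neg_of_strictAntiOn hf hmc hanti ht₁ ht₁₃ hr hr₁ hL hT hTL (hm_diff T (ht₃.trans hT))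
  refine ⟨hneg, strictAntiOn_of_deriv_neg (convex_Ici t₃) (hmc.mono fun x hx => ht₃.trans_le hx)
    fun x hx => hneg x ?_⟩
  rwa [interior_Ici] at hx

/-- **Final step in the proof of Proposition 1 (decrease on `[t₃, ∞)`).**
Let `f` be a positive probability density on `[0, ∞)`, continuous and piecewise
continuously differentiable, with hazard rate `r = f / F̄`, and fix `0 < t₁ < t₃`.
Assume for every `t > t₃` and every `x` with `0 < x < t` one has `r (t - x) ≥ r t`, with
strict inequality whenever `t - x < t₁`.  Let `m` be the renewal density, i.e. the
solution of `m t = f t + ∫ x in 0..t, m x * f (t - x)` for `t ≥ 0`; assume `m` is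
differentiable with `m' x < 0` for all `x ∈ (0, t₃)`, and `r' t ≤ 0` for `t ≥ t₃`.
Then `m' t < 0` for all `t > t₃`; in particular `m` is strictly decreasing on `[t₃, ∞)`. -/
theorem renewal_density_strict_decrease_on_tail
    (t₁ t₃ : ℝ) (ht₁ : 0 < t₁) (ht₁₃ : t₁ < t₃)
    (f m : ℝ → ℝ)
    (hf_meas : Measurable f)
    (hf_pos : ∀ x ∈ Set.Ici (0 : ℝ), 0 < f x)
    (hf_cont : ContinuousOn f (Set.Ici 0))
    (hf_int : IntegrableOn f (Set.Ici 0))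
    (hf_one : (∫ x in Set.Ici (0 : ℝ), f x) = 1)
    (hf_pc1 : PiecewiseC1On f (Set.Ici 0))
    (hr_ge : ∀ t : ℝ, t₃ < t → ∀ x : ℝ, 0 < x → x < t →
      hazardRate f t ≤ hazardRate f (t - x) ∧
        (t - x < t₁ → hazardRate f t < hazardRate f (t - x)))
    (hr'_le : ∀ t ∈ Set.Ici t₃, derivWithin (hazardRate f) (Set.Ici t₃) t ≤ 0)
    (hm_loc : LocallyIntegrableOn m (Set.Ici 0))
    (hm_eq : ∀ t ∈ Set.Ici (0 : ℝ), m t = f t + ∫ x in (0 : ℝ)..t, m x * f (t - x))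
    (hm_diff : ∀ x : ℝ, 0 < x → DifferentiableAt ℝ m x)
    (hm'_neg : ∀ x ∈ Set.Ioo 0 t₃, deriv m x < 0) :
    (∀ t : ℝ, t₃ < t → deriv m t < 0) ∧ StrictAntiOn m (Set.Ici t₃) :=
  renewal_density_strict_decrease_on_tail_general t₁ t₃ ht₁ ht₁₃ f m hf_pos hf_cont hf_int hf_one
    hr_ge hm_loc hm_eq hm_diff hm'_neg
end

section
/- Let X be a random variable on ℕ = {1, 2, …}, p ∈ (0,1), q = 1 − p, and let Y = Σ_{k=1}^{T} X_k be the compound geometric sum, where T is geometric with P(T = n) = p q^{n−1} and X₁, X₂, … are i.i.d. copies of X independent of T. Write f_n = P(X = n), F̄_n = P(X ≥ n), Ḡ_n = P(Y ≥ n). Then for every n ∈ ℕ: F̄_n (Ḡ_{n+2} Ḡ_n − Ḡ_{n+1}²) = p Ḡ_n (F̄_{n+2} F̄_n − F̄_{n+1}²) + q Σ_{k=2}^{n} (F̄_{n+1} f_{k−1} − F̄_n f_k)(Ḡ_{n+1} Ḡ_{n+1−k} − Ḡ_n Ḡ_{n+2−k}). -/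
open Finset

/-- Convolution of two distributions on `ℕ`. -/
def convNat (a b : ℕ → ℝ) : ℕ → ℝ := fun n => ∑ k ∈ Finset.range (n + 1), a k * b (n - k)

/-- `j`-fold convolution power of `f` (with `convPowNat f 0` the unit mass at `0`),
so that `convPowNat f j` is the distribution of the sum of `j` i.i.d. copies of `X`. -/
def convPowNat (f : ℕ → ℝ) : ℕ → ℕ → ℝ
  | 0 => fun n => if n = 0 then 1 else 0
  | j + 1 => convNat (convPowNat f j) f

/-- The distribution `g` of the compound geometric sum `Y = Σ_{k=1}^T X_k`, where
`P(T = j) = p q^{j-1}` (`q = 1 - p`) and the `X_k` are i.i.d. with distribution `f`,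
independent of `T`: `g n = Σ_{j≥1} p q^{j-1} f^{*j} n`. -/
noncomputable def compoundGeom (p : ℝ) (f : ℕ → ℝ) : ℕ → ℝ :=
  fun n => ∑' j : ℕ, p * (1 - p) ^ j * convPowNat f (j + 1) n

/-- Tail (survival) function `n ↦ P(Z ≥ n)` of a distribution `h` on `ℕ`. -/
noncomputable def tailNat (h : ℕ → ℝ) : ℕ → ℝ := fun n => ∑' k : ℕ, h (n + k)

/-!
Conditioning on the first summand, `Y = X₁ + 𝟙[T ≥ 2] Y'` with `Y'` a copy of `Y` independent
of `X₁`, so the law `g` of `Y` satisfies `g = p f + q (f ∗ g)`. Summing tails turns this into the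
renewal equation `Ḡ m = F̄ m + q Σ_{k<m} f k Ḡ (m - k)`, and `Ḡ 1 = 1` because `Y ≥ 1`. The
identity is then pure algebra in the renewal equation at `n`, `n + 1`, `n + 2` and in
`f k = F̄ k - F̄ (k + 1)`.
-/

lemma convNat_comm (a b : ℕ → ℝ) : convNat a b = convNat b a := by
  funext n
  simp only [convNat, ← Finset.Nat.sum_antidiagonal_eq_sum_range_succ (fun i j => a i * b j),
    ← Finset.Nat.sum_antidiagonal_eq_sum_range_succ (fun i j => b i * a j)]
  rw [← Finset.Nat.sum_antidiagonal_swap]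
  simp [mul_comm]

lemma hasSum_convNat {a b : ℕ → ℝ} {A B : ℝ} (ha : HasSum a A) (hb : HasSum b B) :
    HasSum (convNat a b) (A * B) := by
  have ha' : Summable fun n => ‖a n‖ := summable_norm_iff.2 ha.summable
  have hb' : Summable fun n => ‖b n‖ := summable_norm_iff.2 hb.summable
  have h := hasSum_sum_range_mul_of_summable_norm ha' hb'
  rwa [ha.tsum_eq, hb.tsum_eq] at h

lemma sum_range_convNat (a b : ℕ → ℝ) (m : ℕ) :
    ∑ n ∈ range m, convNat a b n = ∑ k ∈ range m, a k * ∑ i ∈ range (m - k), b i := by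
  simp only [convNat, mul_sum]
  exact sum_range_diag_flip m fun k i => a k * b i

lemma tailNat_eq_of_hasSum {h : ℕ → ℝ} {s : ℝ} (hs : HasSum h s) (m : ℕ) :
    tailNat h m = s - ∑ k ∈ range m, h k := by
  simp only [tailNat, add_comm m]
  exact ((hasSum_nat_add_iff' m).2 hs).tsum_eq

lemma tailNat_sub_tailNat_succ {h : ℕ → ℝ} (hs : Summable h) (m : ℕ) :
    tailNat h m - tailNat h (m + 1) = h m := by
  rw [tailNat_eq_of_hasSum hs.hasSum, tailNat_eq_of_hasSum hs.hasSum, sum_range_succ]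
  ring

lemma tailNat_convNat {a b : ℕ → ℝ} {A B : ℝ} (ha : HasSum a A) (hb : HasSum b B) (m : ℕ) :
    tailNat (convNat a b) m = B * tailNat a m + ∑ k ∈ range m, a k * tailNat b (m - k) := by
  rw [tailNat_eq_of_hasSum (hasSum_convNat ha hb), tailNat_eq_of_hasSum ha, sum_range_convNat]
  simp only [tailNat_eq_of_hasSum hb, mul_sub, sum_sub_distrib, ← sum_mul]
  ring

lemma convPowNat_one (f : ℕ → ℝ) : convPowNat f 1 = f := by
  funext n
  simp [convPowNat, convNat]

lemma convPowNat_nonneg {f : ℕ → ℝ} (hf : ∀ n, 0 ≤ f n) : ∀ j n, 0 ≤ convPowNat f j n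
  | 0, n => by unfold convPowNat; positivity
  | j + 1, n => by
    rw [convPowNat]
    exact sum_nonneg fun k _ => mul_nonneg (convPowNat_nonneg hf j k) (hf _)

lemma hasSum_convPowNat {f : ℕ → ℝ} {s : ℝ} (hf : HasSum f s) :
    ∀ j, HasSum (convPowNat f j) (s ^ j)
  | 0 => by simpa [convPowNat] using hasSum_ite_eq 0 (1 : ℝ)
  | j + 1 => by
    rw [convPowNat, pow_succ]
    exact hasSum_convNat (hasSum_convPowNat hf j) hf

section CompoundGeom

variable {p : ℝ} {f : ℕ → ℝ}

lemma hasSum_compoundGeom_terms (hp : p ∈ Set.Ioo (0 : ℝ) 1) (hf_nonneg : ∀ n, 0 ≤ f n)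
    (hf_sum : HasSum f 1) :
    HasSum (fun nj : ℕ × ℕ => p * (1 - p) ^ nj.2 * convPowNat f (nj.2 + 1) nj.1) 1 := by
  obtain ⟨hp0, hp1⟩ := hp
  let u : ℕ × ℕ → ℝ := fun jn => p * (1 - p) ^ jn.1 * convPowNat f (jn.1 + 1) jn.2
  have hfiber : ∀ j, HasSum (fun n => u (j, n)) (p * (1 - p) ^ j) := fun j => by
    simpa [u] using (hasSum_convPowNat hf_sum (j + 1)).mul_left (p * (1 - p) ^ j)
  have hgeom : HasSum (fun j => p * (1 - p) ^ j) 1 := by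
    have h := (hasSum_geometric_of_lt_one (r := 1 - p) (by linarith) (by linarith)).mul_left p
    rwa [sub_sub_cancel, mul_inv_cancel₀ hp0.ne'] at h
  have hnonneg : 0 ≤ u := fun jn => mul_nonneg (by positivity) (convPowNat_nonneg hf_nonneg _ _)
  have hu : Summable u := (summable_prod_of_nonneg hnonneg).2
    ⟨fun j => (hfiber j).summable, hgeom.summable.congr fun j => (hfiber j).tsum_eq.symm⟩
  have htot : ∑' jn, u jn = 1 := (hu.hasSum.prod_fiberwise hfiber).unique hgeom
  exact (Equiv.prodComm ℕ ℕ).hasSum_iff (f := u) |>.2 (htot ▸ hu.hasSum)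

lemma hasSum_compoundGeom (hp : p ∈ Set.Ioo (0 : ℝ) 1) (hf_nonneg : ∀ n, 0 ≤ f n)
    (hf_sum : HasSum f 1) : HasSum (compoundGeom p f) 1 := by
  have h := hasSum_compoundGeom_terms hp hf_nonneg hf_sum
  exact h.prod_fiberwise fun n => (h.summable.prod_factor n).hasSum

lemma compoundGeom_zero (hf0 : f 0 = 0) : compoundGeom p f 0 = 0 := by
  simp [compoundGeom, convPowNat, convNat, hf0]

lemma compoundGeom_eq (hp : p ∈ Set.Ioo (0 : ℝ) 1) (hf_nonneg : ∀ n, 0 ≤ f n)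
    (hf_sum : HasSum f 1) (n : ℕ) :
    compoundGeom p f n = p * f n + (1 - p) * convNat f (compoundGeom p f) n := by
  have hs : ∀ k, Summable fun j => p * (1 - p) ^ j * convPowNat f (j + 1) k :=
    (hasSum_compoundGeom_terms hp hf_nonneg hf_sum).summable.prod_factor
  rw [compoundGeom, (hs n).tsum_eq_zero_add, convNat_comm, convNat, mul_sum]
  simp only [compoundGeom, ← tsum_mul_right, ← tsum_mul_left]
  rw [← Summable.tsum_finsetSum fun k _ => ((hs k).mul_right _).mul_left _]
  simp only [pow_zero, mul_one, zero_add, convPowNat_one]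
  congr 1
  refine tsum_congr fun j => ?_
  rw [convPowNat, convNat, mul_sum]
  exact sum_congr rfl fun k _ => by ring

lemma tailNat_compoundGeom (hp : p ∈ Set.Ioo (0 : ℝ) 1) (hf_nonneg : ∀ n, 0 ≤ f n)
    (hf_sum : HasSum f 1) (m : ℕ) :
    tailNat (compoundGeom p f) m =
      tailNat f m + (1 - p) * ∑ k ∈ range m, f k * tailNat (compoundGeom p f) (m - k) := by
  have hg := hasSum_compoundGeom hp hf_nonneg hf_sum
  have hconv := tailNat_convNat hf_sum hg m
  rw [tailNat_eq_of_hasSum (hasSum_convNat hf_sum hg)] at hconv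
  have hF := tailNat_eq_of_hasSum hf_sum m
  have hsplit : ∑ k ∈ range m, compoundGeom p f k =
      p * ∑ k ∈ range m, f k + (1 - p) * ∑ k ∈ range m, convNat f (compoundGeom p f) k := by
    rw [mul_sum, mul_sum, ← sum_add_distrib]
    exact sum_congr rfl fun k _ => compoundGeom_eq hp hf_nonneg hf_sum k
  rw [tailNat_eq_of_hasSum hg, hsplit]
  linear_combination (1 - p) * hconv - p * hF

end CompoundGeom

lemma sum_Icc_two_eq_sum_range {M : Type*} [AddCommMonoid M] (φ : ℕ → M) (m : ℕ) :
    ∑ k ∈ Icc 2 (m + 1), φ k = ∑ i ∈ range m, φ (i + 2) := by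
  rw [← Ico_add_one_right_eq_Icc, sum_Ico_eq_sum_range,
    show m + 1 + 1 - 2 = m by omega]
  exact sum_congr rfl fun i _ => by rw [add_comm]

lemma key_identity_of_renewal {F G f : ℕ → ℝ} {p : ℝ} (hf0 : f 0 = 0) (hG1 : G 1 = 1)
    (hf : ∀ k, f k = F k - F (k + 1))
    (hG : ∀ m, G m = F m + (1 - p) * ∑ k ∈ range m, f k * G (m - k)) (n : ℕ) (hn : 1 ≤ n) :
    F n * (G (n + 2) * G n - G (n + 1) ^ 2) =
      p * G n * (F (n + 2) * F n - F (n + 1) ^ 2) +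
        (1 - p) * ∑ k ∈ Icc 2 n,
          (F (n + 1) * f (k - 1) - F n * f k) *
            (G (n + 1) * G (n + 1 - k) - G n * G (n + 2 - k)) := by
  obtain ⟨m, rfl⟩ : ∃ m, n = m + 1 := ⟨n - 1, by omega⟩
  -- The sum over `Icc 2 n` splits into four shifted convolution sums, each of which the renewal
  -- equation at `n`, `n + 1` or `n + 2` expresses through `F` and `G`.
  set A := ∑ i ∈ range m, f (i + 1) * G (m - i)
  set B := ∑ i ∈ range m, f (i + 1) * G (m + 1 - i)
  set C := ∑ i ∈ range m, f (i + 2) * G (m - i)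
  set D := ∑ i ∈ range m, f (i + 2) * G (m + 1 - i)
  have hGn : G (m + 1) = F (m + 1) + (1 - p) * A := by
    rw [hG (m + 1)]
    congr 2
    rw [sum_range_succ', hf0, zero_mul, add_zero]
    simp [A]
  have hGn₁ : G (m + 2) = F (m + 2) + (1 - p) * (B + f (m + 1)) := by
    rw [hG (m + 2)]
    congr 2
    rw [sum_range_succ', hf0, zero_mul, add_zero, sum_range_succ]
    simp [B, hG1]
  have hGn₁' : G (m + 2) = F (m + 2) + (1 - p) * (f 1 * G (m + 1) + C) := by
    rw [hG (m + 2)]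
    congr 2
    rw [sum_range_succ', sum_range_succ', hf0, zero_mul, add_zero]
    simp [C]
    ring
  have hGn₂ : G (m + 3) = F (m + 3) + (1 - p) * (f 1 * G (m + 2) + D + f (m + 2)) := by
    rw [hG (m + 3)]
    congr 2
    rw [sum_range_succ', sum_range_succ', hf0, zero_mul, add_zero, sum_range_succ]
    simp [D, hG1]
    ring
  have hsum : ∑ k ∈ Icc 2 (m + 1),
        (F (m + 1 + 1) * f (k - 1) - F (m + 1) * f k) *
          (G (m + 1 + 1) * G (m + 1 + 1 - k) - G (m + 1) * G (m + 1 + 2 - k)) =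
      F (m + 2) * G (m + 2) * A - F (m + 2) * G (m + 1) * B - F (m + 1) * G (m + 2) * C
        + F (m + 1) * G (m + 1) * D := by
    rw [sum_Icc_two_eq_sum_range]
    simp only [A, B, C, D, mul_sum, ← sum_sub_distrib, ← sum_add_distrib]
    refine sum_congr rfl fun i _ => ?_
    rw [show m + 1 + 1 - (i + 2) = m - i by omega, show m + 1 + 2 - (i + 2) = m + 1 - i by omega,
      show i + 2 - 1 = i + 1 by omega]
    ring
  rw [hsum]
  linear_combination F (m + 2) * G (m + 2) * hGn - F (m + 2) * G (m + 1) * hGn₁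
    - F (m + 1) * G (m + 2) * hGn₁' + F (m + 1) * G (m + 1) * hGn₂
    - (1 - p) * F (m + 2) * G (m + 1) * hf (m + 1) + (1 - p) * F (m + 1) * G (m + 1) * hf (m + 2)

/-- **Equation (11) of the paper (the key identity).**
Let `X` be a random variable on `ℕ = {1, 2, …}` with distribution `f` (so `f 0 = 0`), and
let `Y = Σ_{k=1}^T X_k` be the compound geometric sum with parameter `p ∈ (0, 1)`,
`q = 1 - p`, with tail functions `F̄ n = P(X ≥ n)` and `Ḡ n = P(Y ≥ n)`.
Then for every `n ≥ 1`:
`F̄ n (Ḡ (n+2) Ḡ n − Ḡ (n+1)²)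
  = p Ḡ n (F̄ (n+2) F̄ n − F̄ (n+1)²)
    + q Σ_{k=2}^n (F̄ (n+1) f (k-1) − F̄ n f k) (Ḡ (n+1) Ḡ (n+1-k) − Ḡ n Ḡ (n+2-k))`. -/
theorem compoundGeom_key_identity
    (p : ℝ) (hp : p ∈ Set.Ioo (0 : ℝ) 1)
    (f : ℕ → ℝ) (hf0 : f 0 = 0) (hf_nonneg : ∀ n, 0 ≤ f n) (hf_sum : HasSum f 1) :
    ∀ n : ℕ, 1 ≤ n →
      tailNat f n *
          (tailNat (compoundGeom p f) (n + 2) * tailNat (compoundGeom p f) n -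
            tailNat (compoundGeom p f) (n + 1) ^ 2) =
        p * tailNat (compoundGeom p f) n *
            (tailNat f (n + 2) * tailNat f n - tailNat f (n + 1) ^ 2) +
          (1 - p) * ∑ k ∈ Finset.Icc 2 n,
            (tailNat f (n + 1) * f (k - 1) - tailNat f n * f k) *
              (tailNat (compoundGeom p f) (n + 1) * tailNat (compoundGeom p f) (n + 1 - k) -
                tailNat (compoundGeom p f) n * tailNat (compoundGeom p f) (n + 2 - k)) := by
  intro n hn
  have hG1 : tailNat (compoundGeom p f) 1 = 1 := by
    rw [tailNat_eq_of_hasSum (hasSum_compoundGeom hp hf_nonneg hf_sum), sum_range_one,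
      compoundGeom_zero hf0, sub_zero]
  exact key_identity_of_renewal hf0 hG1
    (fun k => (tailNat_sub_tailNat_succ hf_sum.summable k).symm)
    (tailNat_compoundGeom hp hf_nonneg hf_sum) n hn
end
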